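/- arXiv:2603.15529 — 6 statements merged into one kernel-verified Lean document; each statement's English description precedes it below -/
import Mathlib

section
/- Let (W,S) be a Coxeter system with simple generators indexed by I, let w ∈ W with w ≠ 1, and let k ∈ I be such that ℓ(w s_k) > ℓ(w). Then Annex(w s_k) ⊆ {x y : x ∈ Annex(w), y ∈ W_{I∖{k}}}, where Annex(v) = {z ∈ W : v ≰ z} and W_{I∖{k}} is the standard parabolic subgroup generated by the simple generators s_i with i ≠ k. -/
/-- The Bruhat order on a Coxeter group, via the subword property: `w ≤ x` iff every
reduced expression for `x` contains a reduced expression for `w` as a subword. -/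
def CoxeterSystem.bruhatLE {B W : Type*} [Group W] {M : CoxeterMatrix B}
    (cs : CoxeterSystem M W) (w x : W) : Prop :=
  ∀ ω : List B, cs.IsReduced ω → x = cs.wordProd ω →
    ∃ ω' : List B, ω'.Sublist ω ∧ cs.IsReduced ω' ∧ w = cs.wordProd ω'

/-- The annex of `w`: the set of elements `z` with `w ≰ z` in Bruhat order. -/
def CoxeterSystem.annex {B W : Type*} [Group W] {M : CoxeterMatrix B}
    (cs : CoxeterSystem M W) (w : W) : Set W :=
  {z | ¬ cs.bruhatLE w z}

private lemma wordProd_mem_closure_aux {B W : Type*} [Group W] {M : CoxeterMatrix B}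
    (cs : CoxeterSystem M W) (k : B) (l : List B) (h : ∀ i ∈ l, i ≠ k) :
    cs.wordProd l ∈ Subgroup.closure (cs.simple '' {i | i ≠ k}) := by
  induction l with
  | nil => rw [cs.wordProd_nil]; exact Subgroup.one_mem _
  | cons a l ih =>
    rw [cs.wordProd_cons]
    exact mul_mem (Subgroup.subset_closure ⟨a, h a (List.mem_cons_self (a := a) (l := l)), rfl⟩)
      (ih fun i hi => h i (List.mem_cons_of_mem a hi))

theorem annex_mul_simple_subset {B W : Type*} [Group W] {M : CoxeterMatrix B}
    (cs : CoxeterSystem M W) (w : W) (k : B) (hw1 : w ≠ 1)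
    (hk : cs.length (w * cs.simple k) > cs.length w) :
    cs.annex (w * cs.simple k) ⊆
      {z | ∃ x y : W, x ∈ cs.annex w ∧
        y ∈ Subgroup.closure (cs.simple '' {i | i ≠ k}) ∧ z = x * y} := by
  classical
  intro z hz
  simp only [CoxeterSystem.annex, Set.mem_setOf_eq, CoxeterSystem.bruhatLE] at hz ⊢
  push_neg at hz
  obtain ⟨ω, hred, hπ, hno⟩ := hz
  have hlk : cs.length (w * cs.simple k) = cs.length w + 1 := by
    rcases cs.length_mul_simple w k with h | h
    · exact h
    · omega
  -- split ω into ω₁ ++ ω₂ where ω₂ is the maximal k-free suffix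
  obtain ⟨ω₁, ω₂, hsplit, h2k, h1k⟩ :
      ∃ ω₁ ω₂ : List B, ω = ω₁ ++ ω₂ ∧ (∀ i ∈ ω₂, i ≠ k) ∧
        (ω₁ = [] ∨ ∃ σ, ω₁ = σ ++ [k]) := by
    set p : B → Bool := fun i => decide (i ≠ k) with hp
    refine ⟨(ω.reverse.dropWhile p).reverse, (ω.reverse.takeWhile p).reverse, ?_, ?_, ?_⟩
    · rw [← List.reverse_append, List.takeWhile_append_dropWhile, List.reverse_reverse]
    · intro i hi
      rw [List.mem_reverse] at hi
      have := List.mem_takeWhile_imp hi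
      simpa [hp] using this
    · rcases h : ω.reverse.dropWhile p with _ | ⟨a, l⟩
      · left; simp
      · right
        refine ⟨l.reverse, ?_⟩
        have ha : p ((ω.reverse.dropWhile p).head (by simp [h])) = false :=
          List.head_dropWhile_not p (l := ω.reverse) _
        simp only [h, List.head_cons] at ha
        simp only [h, List.head_cons, hp, decide_eq_false_iff_not, not_not] at ha
        rw [List.reverse_cons, ha]
  have hred1 : cs.IsReduced ω₁ := by
    have := hred.take ω₁.length
    rwa [hsplit, List.take_left] at this
  have hred2 : cs.IsReduced ω₂ := by
    have := hred.drop ω₁.length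
    rwa [hsplit, List.drop_left] at this
  refine ⟨cs.wordProd ω₁, cs.wordProd ω₂, ?_, wordProd_mem_closure_aux cs k ω₂ h2k, ?_⟩
  · -- cs.wordProd ω₁ ∈ annex w
    intro hb
    obtain ⟨τ, hsub, hτred, hτw⟩ := hb ω₁ hred1 rfl
    rcases h1k with h1 | ⟨σ, h1⟩
    · subst h1
      rw [List.sublist_nil] at hsub
      subst hsub
      rw [cs.wordProd_nil] at hτw
      exact hw1 hτw
    · subst h1
      rw [List.sublist_append_iff] at hsub
      obtain ⟨a, b, rfl, ha, hb'⟩ := hsub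
      rcases List.sublist_singleton.mp hb' with rfl | rfl
      · -- τ = a, build a reduced subword a ++ [k] for w * s k inside ω
        rw [List.append_nil] at hτw hτred
        have hlen : cs.length (cs.wordProd a) = a.length := hτred
        have hred' : cs.IsReduced (a ++ [k]) := by
          show cs.length (cs.wordProd (a ++ [k])) = (a ++ [k]).length
          rw [cs.wordProd_append, cs.wordProd_singleton, ← hτw, hlk]
          simp only [List.length_append, List.length_singleton]
          rw [← hτw] at hlen
          omega
        refine hno (a ++ [k]) ?_ hred' ?_
        · rw [hsplit]
          exact (ha.append (List.Sublist.refl [k])).trans (List.sublist_append_left _ _)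
        · rw [cs.wordProd_append, cs.wordProd_singleton, ← hτw]
      · -- τ = a ++ [k] : then π a = w * s k, length contradiction
        have hπa : cs.wordProd a = w * cs.simple k := by
          rw [hτw, cs.wordProd_append, cs.wordProd_singleton, mul_assoc,
            cs.simple_mul_simple_self, mul_one]
        have h1 : cs.length (cs.wordProd a) ≤ a.length := cs.length_wordProd_le a
        have h2 : cs.length (cs.wordProd (a ++ [k])) = (a ++ [k]).length := hτred
        rw [← hτw] at h2
        simp only [List.length_append, List.length_singleton] at h2
        rw [hπa, hlk, h2] at h1
        omega
  · rw [hπ, hsplit, cs.wordProd_append]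
end

section
/- Let (W,S) be a Coxeter system with generators indexed by I such that every proper standard parabolic subgroup W_{J} (J ⊊ I) is finite. Then for every w ∈ W, the annex Annex(w) = {z ∈ W : w ≰ z} is a finite set. -/
/-- If every letter of `ω` lies in `J`, then the word product lies in the parabolic
subgroup generated by the simple reflections indexed by `J`. -/
lemma wordProd_mem_closure {B W : Type*} [Group W] {M : CoxeterMatrix B}
    (cs : CoxeterSystem M W) {J : Set B} (ω : List B) (h : ∀ i ∈ ω, i ∈ J) :
    cs.wordProd ω ∈ Subgroup.closure (cs.simple '' J) := by
  induction ω with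
  | nil => rw [cs.wordProd_nil]; exact one_mem _
  | cons i ω ih =>
    rw [cs.wordProd_cons]
    exact mul_mem (Subgroup.subset_closure ⟨i, h i (List.mem_cons_self), rfl⟩)
      (ih fun j hj => h j (List.mem_cons_of_mem i hj))

theorem annex_finite {B W : Type*} [Group W] [Finite B] {M : CoxeterMatrix B}
    (cs : CoxeterSystem M W)
    (hpar : ∀ J : Set B, J ⊂ Set.univ →
      (Subgroup.closure (cs.simple '' J) : Set W).Finite) :
    ∀ w : W, (cs.annex w).Finite := by
  intro w
  obtain ⟨a, ha_red, ha_prod⟩ := cs.exists_reduced_word' w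
  -- the union of the maximal proper parabolic subgroups is finite
  have hF : (⋃ b : B, (Subgroup.closure (cs.simple '' (Set.univ \ {b})) : Set W)).Finite := by
    apply Set.finite_iUnion
    intro b
    exact hpar _ (Set.sdiff_singleton_ssubset.mpr (Set.mem_univ b))
  -- lengths on this finite set are bounded by some N
  obtain ⟨m, hm⟩ := (hF.image cs.length).bddAbove
  set N : ℕ := m + 1 with hN
  -- any reduced word of length ≥ N contains every letter
  have key : ∀ ω : List B, cs.IsReduced ω → N ≤ ω.length → ∀ b : B, b ∈ ω := by
    intro ω hred hlen b
    by_contra hb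
    have hmem : cs.wordProd ω ∈ Subgroup.closure (cs.simple '' (Set.univ \ {b})) := by
      apply wordProd_mem_closure
      intro i hi
      exact ⟨Set.mem_univ i, fun h => hb (h ▸ hi)⟩
    have : cs.length (cs.wordProd ω) ∈ cs.length '' (⋃ b : B,
        (Subgroup.closure (cs.simple '' (Set.univ \ {b})) : Set W)) :=
      ⟨cs.wordProd ω, Set.mem_iUnion.mpr ⟨b, hmem⟩, rfl⟩
    have hle := hm this
    rw [hred] at hle
    omega
  -- any reduced word of length ≥ N * k contains any word of length k as a sublist
  have sub : ∀ (t : List B) (ω : List B), cs.IsReduced ω → N * t.length ≤ ω.length →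
      t.Sublist ω := by
    intro t
    induction t with
    | nil => intro ω _ _; exact List.nil_sublist ω
    | cons b rest ih =>
      intro ω hred hlen
      rw [List.length_cons] at hlen
      have hNle : N ≤ ω.length := by nlinarith
      have hb : b ∈ ω.take N := by
        apply key _ (hred.take N) _ b
        rw [List.length_take]
        omega
      obtain ⟨s, t', hst⟩ := List.append_of_mem hb
      have hslen : s.length + 1 ≤ N := by
        have := congrArg List.length hst
        rw [List.length_take, List.length_append, List.length_cons] at this
        omega
      have htail : rest.Sublist (ω.drop (s.length + 1)) := by
        apply ih _ (hred.drop _)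
        rw [List.length_drop]
        have : N * (rest.length + 1) = N * rest.length + N := by ring
        omega
      have hhead : ω.take (s.length + 1) = s ++ [b] := by
        have : ω.take (s.length + 1) = (ω.take N).take (s.length + 1) := by
          rw [List.take_take]
          congr 1
          omega
        rw [this, hst, List.take_append, List.take_of_length_le (by omega),
          show s.length + 1 - s.length = 1 from by omega]
        simp
      have hfin : ([b] ++ rest).Sublist ((s ++ [b]) ++ ω.drop (s.length + 1)) :=
        List.Sublist.append (List.sublist_append_right s [b]) htail
      rw [← hhead, List.take_append_drop] at hfin
      exact hfin
  -- every z of length ≥ N * ℓ(w) dominates w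
  have hdom : ∀ z : W, N * a.length ≤ cs.length z → cs.bruhatLE w z := by
    intro z hz ω hred hprod
    refine ⟨a, sub a ω hred ?_, ha_red, ha_prod⟩
    have : cs.length z = ω.length := by rw [hprod, hred]
    omega
  -- hence the annex is contained in a finite set
  apply Set.Finite.subset ((List.finite_length_lt B (N * a.length)).image cs.wordProd)
  intro z hz
  have hzlen : cs.length z < N * a.length := by
    by_contra h
    exact hz (hdom z (by omega))
  obtain ⟨ω, hω, hωp⟩ := cs.exists_reduced_word z
  exact ⟨ω, by rw [Set.mem_setOf_eq, ← (hω : cs.length (cs.wordProd ω) = ω.length), ← hωp]; exact hzlen, hωp.symm⟩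
end

section
/- Let (W,S) be a Coxeter system, w ∈ W with w ≠ 1, k ∈ I with ℓ(w s_k) > ℓ(w), and suppose the right descent set of w s_k is exactly {k}. Then Annex(w s_k) = Annex(w) · W_{I∖{k}}, i.e., {z : w s_k ≰ z} equals {x y : w ≰ x, y ∈ W_{I∖{k}}}. -/
open List

namespace CoxAux
open scoped Classical
variable {B W : Type*} [Group W] {M : CoxeterMatrix B} (cs : CoxeterSystem M W)

noncomputable def sigmaFun (i : B) : W × ZMod 2 → W × ZMod 2 :=
  fun p => (cs.simple i * p.1 * cs.simple i, if p.1 = cs.simple i then p.2 + 1 else p.2)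

theorem simple_conj_simple_self (i : B) :
    cs.simple i * cs.simple i * cs.simple i = cs.simple i := by
  rw [cs.simple_mul_simple_self, one_mul]

theorem conj_simple_cancel (i : B) (t : W) :
    cs.simple i * (cs.simple i * t * cs.simple i) * cs.simple i = t := by
  have h1 : cs.simple i * (cs.simple i * t * cs.simple i) = t * cs.simple i := by
    rw [← mul_assoc, ← mul_assoc, cs.simple_mul_simple_self, one_mul]
  rw [h1, cs.simple_mul_simple_cancel_right]

theorem sigmaFun_invol (i : B) : Function.Involutive (sigmaFun cs i) := by
  rintro ⟨t, ε⟩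
  by_cases h : t = cs.simple i
  · subst h
    have hfst : cs.simple i * cs.simple i * cs.simple i = cs.simple i :=
      simple_conj_simple_self cs i
    simp only [sigmaFun, hfst, eq_self_iff_true, if_true]
    rw [add_assoc, show ((1 : ZMod 2) + 1) = 0 by decide, add_zero]
  · have h2 : cs.simple i * t * cs.simple i ≠ cs.simple i := by
      intro hc
      apply h
      have := congrArg (fun z => cs.simple i * z * cs.simple i) hc
      simpa only [conj_simple_cancel, simple_conj_simple_self] using this
    simp only [sigmaFun, if_neg h, if_neg h2, conj_simple_cancel]

noncomputable def sigma (i : B) : Equiv.Perm (W × ZMod 2) := (sigmaFun_invol cs i).toPerm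

theorem sigma_apply (i : B) (p : W × ZMod 2) :
    sigma cs i p = (cs.simple i * p.1 * cs.simple i,
      if p.1 = cs.simple i then p.2 + 1 else p.2) := rfl

theorem conj_eq_iff (a t x : W) : a * t * a⁻¹ = x ↔ t = a⁻¹ * x * a := by
  constructor
  · intro h; subst h; group
  · intro h; subst h; group

theorem d_pow_inv (i j : B) (n : ℕ) :
    (cs.simple j * cs.simple i) ^ n = ((cs.simple i * cs.simple j) ^ n)⁻¹ := by
  rw [← inv_pow]
  congr 1
  rw [mul_inv_rev, cs.inv_simple, cs.inv_simple]

theorem sj_mul_c_pow (i j : B) (n : ℕ) :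
    cs.simple j * (cs.simple i * cs.simple j) ^ n
      = (cs.simple j * cs.simple i) ^ n * cs.simple j := by
  induction n with
  | zero => simp
  | succ n ih =>
    rw [pow_succ, pow_succ, ← mul_assoc, ih]
    simp only [mul_assoc]

theorem c_pow_inv_sj (i j : B) (n : ℕ) :
    ((cs.simple i * cs.simple j) ^ n)⁻¹ * cs.simple j * (cs.simple i * cs.simple j) ^ n
      = (cs.simple j * cs.simple i) ^ (2 * n) * cs.simple j := by
  rw [← d_pow_inv, two_mul, pow_add, mul_assoc, sj_mul_c_pow, ← mul_assoc]

theorem key2 (i j : B) (n : ℕ) :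
    ((cs.simple i * cs.simple j) ^ n)⁻¹ * (cs.simple j * cs.simple i * cs.simple j) *
        (cs.simple i * cs.simple j) ^ n
      = (cs.simple j * cs.simple i) ^ (2 * n + 1) * cs.simple j := by
  have step1 : ((cs.simple i * cs.simple j) ^ n)⁻¹ * (cs.simple j * cs.simple i * cs.simple j) *
        (cs.simple i * cs.simple j) ^ n
      = (((cs.simple i * cs.simple j) ^ n)⁻¹ * cs.simple j * (cs.simple i * cs.simple j) ^ n) *
        (((cs.simple i * cs.simple j) ^ n)⁻¹ * (cs.simple i * cs.simple j) *
          (cs.simple i * cs.simple j) ^ n) := by group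
  have hcc : (cs.simple i * cs.simple j) * (cs.simple i * cs.simple j) ^ n
      = (cs.simple i * cs.simple j) ^ n * (cs.simple i * cs.simple j) := by
    rw [← pow_succ', pow_succ]
  have step2 : ((cs.simple i * cs.simple j) ^ n)⁻¹ * (cs.simple i * cs.simple j) *
      (cs.simple i * cs.simple j) ^ n = cs.simple i * cs.simple j := by
    rw [mul_assoc, hcc, inv_mul_cancel_left]
  rw [step1, step2, c_pow_inv_sj, pow_succ]
  group

theorem sigma_mul_pow_apply (i j : B) (n : ℕ) (t : W) (ε : ZMod 2) :
    ((sigma cs i * sigma cs j) ^ n) (t, ε) =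
      ((cs.simple i * cs.simple j) ^ n * t * (cs.simple j * cs.simple i) ^ n,
        ε + ∑ r ∈ Finset.range (2 * n),
          (if t = (cs.simple j * cs.simple i) ^ r * cs.simple j then 1 else 0)) := by
  induction n with
  | zero => simp
  | succ n ih =>
    rw [pow_succ', Equiv.Perm.mul_apply, ih, Equiv.Perm.mul_apply, sigma_apply, sigma_apply]
    simp only []
    have cond1 : ((cs.simple i * cs.simple j) ^ n * t * (cs.simple j * cs.simple i) ^ n
        = cs.simple j) ↔ (t = (cs.simple j * cs.simple i) ^ (2 * n) * cs.simple j) := by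
      rw [d_pow_inv cs i j n, conj_eq_iff, c_pow_inv_sj]
    have cond2 : (cs.simple j * ((cs.simple i * cs.simple j) ^ n * t *
          (cs.simple j * cs.simple i) ^ n) * cs.simple j = cs.simple i)
        ↔ (t = (cs.simple j * cs.simple i) ^ (2 * n + 1) * cs.simple j) := by
      have e1 : (cs.simple j * ((cs.simple i * cs.simple j) ^ n * t *
            (cs.simple j * cs.simple i) ^ n) * cs.simple j = cs.simple i)
          ↔ ((cs.simple i * cs.simple j) ^ n * t * (cs.simple j * cs.simple i) ^ n
            = cs.simple j * cs.simple i * cs.simple j) := by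
        constructor
        · intro h
          have h' := congrArg (fun z => cs.simple j * z * cs.simple j) h
          rw [conj_simple_cancel] at h'
          exact h'
        · intro h
          rw [h]
          exact conj_simple_cancel cs j (cs.simple i)
      rw [e1, d_pow_inv cs i j n, conj_eq_iff, key2]
    rw [cond1, cond2]
    have hrange : 2 * (n + 1) = (2 * n) + 1 + 1 := by ring
    rw [hrange, Finset.sum_range_succ, Finset.sum_range_succ]
    simp only [Prod.mk.injEq]
    constructor
    · rw [pow_succ' (cs.simple i * cs.simple j), pow_succ (cs.simple j * cs.simple i)]
      group
    · split_ifs <;> ring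

theorem liftable : M.IsLiftable (fun i => sigma cs i) := by
  intro i j
  apply Equiv.ext
  rintro ⟨t, ε⟩
  rw [sigma_mul_pow_apply, cs.simple_mul_simple_pow i j, cs.simple_mul_simple_pow' i j]
  have hsum : ∑ r ∈ Finset.range (2 * M.M i j),
      (if t = (cs.simple j * cs.simple i) ^ r * cs.simple j then (1 : ZMod 2) else 0) = 0 := by
    rw [two_mul, Finset.sum_range_add]
    have hshift : ∀ r, (if t = (cs.simple j * cs.simple i) ^ (M.M i j + r) * cs.simple j
        then (1 : ZMod 2) else 0)
        = (if t = (cs.simple j * cs.simple i) ^ r * cs.simple j then (1 : ZMod 2) else 0) := by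
      intro r
      rw [pow_add, cs.simple_mul_simple_pow' i j, one_mul]
    rw [Finset.sum_congr rfl (fun r _ => hshift r), ← Finset.sum_add_distrib]
    apply Finset.sum_eq_zero
    intro r _
    split_ifs <;> decide
  rw [hsum, one_mul, mul_one, add_zero]
  rfl

/-- The Bourbaki homomorphism `W →* Perm (W × ZMod 2)`. -/
noncomputable def phi : W →* Equiv.Perm (W × ZMod 2) :=
  cs.lift ⟨fun i => sigma cs i, liftable cs⟩

theorem phi_simple (i : B) : phi cs (cs.simple i) = sigma cs i :=
  cs.lift_apply_simple (liftable cs) i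

/-- The parity function. -/
noncomputable def eta (w t : W) : ZMod 2 := ((phi cs w) (t, 0)).2

theorem phi_apply (w t : W) (ε : ZMod 2) :
    phi cs w (t, ε) = (w * t * w⁻¹, ε + eta cs w t) := by
  induction w using CoxeterSystem.simple_induction_left (cs := cs) generalizing t ε with
  | one =>
    simp only [map_one, Equiv.Perm.one_apply, eta, map_one, Equiv.Perm.one_apply]
    simp
  | mul_simple_left w i ih =>
    have expand : ∀ δ : ZMod 2, phi cs (cs.simple i * w) (t, δ) =
        (cs.simple i * (w * t * w⁻¹) * cs.simple i,
          if w * t * w⁻¹ = cs.simple i then (δ + eta cs w t) + 1 else (δ + eta cs w t)) := by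
      intro δ
      rw [map_mul, Equiv.Perm.mul_apply, ih, phi_simple, sigma_apply]
    rw [expand ε]
    have heta : eta cs (cs.simple i * w) t
        = if w * t * w⁻¹ = cs.simple i then (0 + eta cs w t) + 1 else (0 + eta cs w t) := by
      rw [eta, expand 0]
    rw [heta]
    have hfst : cs.simple i * (w * t * w⁻¹) * cs.simple i
        = cs.simple i * w * t * (cs.simple i * w)⁻¹ := by
      rw [mul_inv_rev, cs.inv_simple]
      simp only [mul_assoc]
    rw [hfst]
    simp only [Prod.mk.injEq]
    refine ⟨by trivial, ?_⟩
    split_ifs <;> ring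

theorem eta_cocycle (a b t : W) :
    eta cs (a * b) t = eta cs b t + eta cs a (b * t * b⁻¹) := by
  have h1 : phi cs (a * b) (t, 0) = (a * b * t * (a * b)⁻¹, 0 + eta cs (a * b) t) :=
    phi_apply cs (a * b) t 0
  have h2 : phi cs (a * b) (t, 0) = phi cs a (phi cs b (t, 0)) := by
    rw [map_mul, Equiv.Perm.mul_apply]
  rw [phi_apply cs b t 0, phi_apply cs a (b * t * b⁻¹) (0 + eta cs b t)] at h2
  rw [h1] at h2
  have := congrArg Prod.snd h2
  simp only at this
  simpa using this

theorem eta_simple (i : B) (t : W) :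
    eta cs (cs.simple i) t = if t = cs.simple i then 1 else 0 := by
  rw [eta, phi_simple, sigma_apply]
  split_ifs <;> simp

theorem eta_one (t : W) : eta cs 1 t = 0 := by
  simp [eta, map_one]

theorem eta_wordProd (ω : List B) (t : W) :
    eta cs (cs.wordProd ω) t = ((cs.rightInvSeq ω).count t : ZMod 2) := by
  induction ω with
  | nil => simp [eta_one]
  | cons i α ih =>
    rw [cs.wordProd_cons, eta_cocycle, ih, eta_simple]
    have hris : cs.rightInvSeq (i :: α)
        = ((cs.wordProd α)⁻¹ * cs.simple i * cs.wordProd α) :: cs.rightInvSeq α := rfl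
    rw [hris, List.count_cons]
    have hcond : (cs.wordProd α * t * (cs.wordProd α)⁻¹ = cs.simple i)
        = ((cs.wordProd α)⁻¹ * cs.simple i * cs.wordProd α = t) := by
      apply propext
      rw [conj_eq_iff]
      exact eq_comm
    rw [hcond]
    push_cast
    simp only [beq_iff_eq]

theorem zmod2_cases (x : ZMod 2) : x = 0 ∨ x = 1 := by
  revert x; decide

theorem descent_of_eta_one {u : W} {i : B} (h : eta cs u (cs.simple i) = 1) :
    cs.length (u * cs.simple i) < cs.length u := by
  obtain ⟨δ, hred, rfl⟩ := cs.exists_reduced_word' u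
  rw [eta_wordProd] at h
  have hcount : (cs.rightInvSeq δ).count (cs.simple i) ≠ 0 := by
    intro hc
    rw [hc] at h
    simp at h
  have hmem : cs.simple i ∈ cs.rightInvSeq δ :=
    List.count_pos_iff.mp (Nat.pos_of_ne_zero hcount)
  exact (cs.isRightInversion_of_mem_rightInvSeq hred hmem).2

theorem eta_one_of_descent {u : W} {i : B}
    (h : cs.length (u * cs.simple i) < cs.length u) :
    eta cs u (cs.simple i) = 1 := by
  have hu : u * cs.simple i * cs.simple i = u := cs.simple_mul_simple_cancel_right i
  have hco := eta_cocycle cs (u * cs.simple i) (cs.simple i) (cs.simple i)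
  rw [hu] at hco
  have h2 : cs.simple i * cs.simple i * (cs.simple i)⁻¹ = cs.simple i := by
    rw [cs.inv_simple, simple_conj_simple_self]
  rw [h2, eta_simple, if_pos rfl] at hco
  rcases zmod2_cases (eta cs (u * cs.simple i) (cs.simple i)) with h0 | h1
  · rw [hco, h0, add_zero]
  · exfalso
    have := descent_of_eta_one cs h1
    rw [hu] at this
    omega

theorem mem_ris_of_descent {ω : List B} {i : B}
    (h : cs.length (cs.wordProd ω * cs.simple i) < cs.length (cs.wordProd ω)) :
    cs.simple i ∈ cs.rightInvSeq ω := by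
  have h1 := eta_one_of_descent cs h
  rw [eta_wordProd] at h1
  have hcount : (cs.rightInvSeq ω).count (cs.simple i) ≠ 0 := by
    intro hc
    rw [hc] at h1
    simp at h1
  exact List.count_pos_iff.mp (Nat.pos_of_ne_zero hcount)

/-- Exchange: from any word, a descent can be realized by deleting one letter. -/
theorem exchange_aux {ω : List B} {i : B}
    (h : cs.length (cs.wordProd ω * cs.simple i) < cs.length (cs.wordProd ω)) :
    ∃ γ : List B, γ.Sublist ω ∧ γ.length + 1 = ω.length ∧
      cs.wordProd γ = cs.wordProd ω * cs.simple i := by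
  have hmem := mem_ris_of_descent cs h
  obtain ⟨j, hj, hget⟩ := List.mem_iff_getElem.mp hmem
  have hj' : j < ω.length := by
    rw [cs.length_rightInvSeq] at hj
    exact hj
  refine ⟨ω.eraseIdx j, List.eraseIdx_sublist ω j, List.length_eraseIdx_add_one hj', ?_⟩
  have hgetD : (cs.rightInvSeq ω).getD j 1 = cs.simple i := by
    rw [List.getD_eq_getElem _ 1 hj, hget]
  rw [← hgetD]
  exact (cs.wordProd_mul_getD_rightInvSeq ω j).symm

theorem exchange_red {ω : List B} {i : B} (hred : cs.IsReduced ω)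
    (h : cs.length (cs.wordProd ω * cs.simple i) < cs.length (cs.wordProd ω)) :
    ∃ γ : List B, γ.Sublist ω ∧ cs.IsReduced γ ∧
      cs.wordProd γ = cs.wordProd ω * cs.simple i := by
  obtain ⟨γ, hsub, hlen, hprod⟩ := exchange_aux cs h
  refine ⟨γ, hsub, ?_, hprod⟩
  have hdisj := cs.length_mul_simple (cs.wordProd ω) i
  have : cs.length (cs.wordProd ω * cs.simple i) + 1 = cs.length (cs.wordProd ω) := by
    rcases hdisj with h1 | h1
    · omega
    · exact h1
  rw [CoxeterSystem.IsReduced, hprod]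
  rw [CoxeterSystem.IsReduced] at hred
  omega

theorem exchange_red_left {φ : List B} {i : B} (hred : cs.IsReduced φ)
    (h : cs.length (cs.simple i * cs.wordProd φ) < cs.length (cs.wordProd φ)) :
    ∃ ψ : List B, ψ.Sublist φ ∧ cs.IsReduced ψ ∧
      cs.wordProd ψ = cs.simple i * cs.wordProd φ := by
  have hredrev : cs.IsReduced φ.reverse := (cs.isReduced_reverse_iff φ).mpr hred
  have hlen : cs.length (cs.wordProd φ.reverse * cs.simple i)
      < cs.length (cs.wordProd φ.reverse) := by
    rw [cs.wordProd_reverse]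
    have h1 : (cs.wordProd φ)⁻¹ * cs.simple i = (cs.simple i * cs.wordProd φ)⁻¹ := by
      rw [mul_inv_rev, cs.inv_simple]
    rw [h1, cs.length_inv, cs.length_inv]
    exact h
  obtain ⟨γ, hsub, hγred, hγprod⟩ := exchange_red cs hredrev hlen
  refine ⟨γ.reverse, ?_, (cs.isReduced_reverse_iff γ).mpr hγred, ?_⟩
  · have := hsub.reverse
    rwa [List.reverse_reverse] at this
  · rw [cs.wordProd_reverse, hγprod, cs.wordProd_reverse, mul_inv_rev, inv_inv, cs.inv_simple]

/-- Deletion: every word contains a reduced sublist with the same product. -/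
theorem exists_reduced_sublist (ω : List B) :
    ∃ φ : List B, φ.Sublist ω ∧ cs.IsReduced φ ∧ cs.wordProd φ = cs.wordProd ω := by
  induction ω with
  | nil => exact ⟨[], List.Sublist.refl _, by simp [CoxeterSystem.IsReduced], rfl⟩
  | cons i α ih =>
    obtain ⟨φ₀, hsub, hred, hprod⟩ := ih
    rcases cs.length_simple_mul (cs.wordProd α) i with hup | hdown
    · refine ⟨i :: φ₀, hsub.cons₂ i, ?_, ?_⟩
      · rw [CoxeterSystem.IsReduced, cs.wordProd_cons, hprod, hup, List.length_cons]
        rw [CoxeterSystem.IsReduced] at hred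
        rw [← hred]
        have : cs.length (cs.wordProd φ₀) = cs.length (cs.wordProd α) := by rw [hprod]
        omega
      · rw [cs.wordProd_cons, cs.wordProd_cons, hprod]
    · have hlt : cs.length (cs.simple i * cs.wordProd φ₀) < cs.length (cs.wordProd φ₀) := by
        rw [hprod]; omega
      obtain ⟨ψ, hψsub, hψred, hψprod⟩ := exchange_red_left cs hred hlt
      refine ⟨ψ, (hψsub.trans hsub).trans (List.sublist_cons_self i α), hψred, ?_⟩
      rw [hψprod, hprod, cs.wordProd_cons]
section BruhatLemmas

theorem bruhatLE_trans {w u x : W} (h1 : cs.bruhatLE w u) (h2 : cs.bruhatLE u x) :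
    cs.bruhatLE w x := by
  intro ω hred hprod
  obtain ⟨φ, hφsub, hφred, hφprod⟩ := h2 ω hred hprod
  obtain ⟨ψ, hψsub, hψred, hψprod⟩ := h1 φ hφred hφprod
  exact ⟨ψ, hψsub.trans hφsub, hψred, hψprod⟩

theorem eq_one_of_bruhatLE_one {w : W} (h : cs.bruhatLE w 1) : w = 1 := by
  obtain ⟨φ, hφsub, _, hφprod⟩ := h [] (by simp [CoxeterSystem.IsReduced]) (by simp)
  rw [List.sublist_nil.mp hφsub] at hφprod
  simpa using hφprod

theorem bruhatLE_mul_simple_right {w : W} {i : B}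
    (h : cs.length w < cs.length (w * cs.simple i)) :
    cs.bruhatLE w (w * cs.simple i) := by
  intro ω hred hprod
  have hlt : cs.length (cs.wordProd ω * cs.simple i) < cs.length (cs.wordProd ω) := by
    rw [← hprod, cs.simple_mul_simple_cancel_right]
    exact h
  obtain ⟨γ, hsub, hγred, hγprod⟩ := exchange_red cs hred hlt
  refine ⟨γ, hsub, hγred, ?_⟩
  rw [hγprod, ← hprod, cs.simple_mul_simple_cancel_right]

theorem bruhatLE_of_descent {v z : W} {j : B}
    (hlt : cs.length (z * cs.simple j) < cs.length z)
    (h : cs.bruhatLE v (z * cs.simple j)) : cs.bruhatLE v z := by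
  intro ω hred hprod
  have hlt' : cs.length (cs.wordProd ω * cs.simple j) < cs.length (cs.wordProd ω) := by
    rw [← hprod]; exact hlt
  obtain ⟨γ, hsub, hγred, hγprod⟩ := exchange_red cs hred hlt'
  obtain ⟨φ, hφsub, hφred, hφprod⟩ := h γ hγred (by rw [hγprod, hprod])
  exact ⟨φ, hφsub.trans hsub, hφred, hφprod⟩

theorem sublist_concat_cases {l r : List B} {a : B} (h : l.Sublist (r ++ [a])) :
    l.Sublist r ∨ ∃ l', l = l' ++ [a] ∧ l'.Sublist r := by
  have h1 : l.reverse.Sublist (a :: r.reverse) := by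
    have h2 := h.reverse
    rwa [List.reverse_append, List.reverse_singleton, List.singleton_append] at h2
  rcases List.sublist_cons_iff.mp h1 with h2 | ⟨l', heq, h2⟩
  · left
    have h3 := h2.reverse
    simp only [List.reverse_reverse] at h3
    exact h3
  · right
    refine ⟨l'.reverse, ?_, ?_⟩
    · have h3 := congrArg List.reverse heq
      rw [List.reverse_reverse] at h3
      rw [h3, List.reverse_cons]
    · have h3 := h2.reverse
      simp only [List.reverse_reverse] at h3
      exact h3

theorem bruhatLE_of_ascent {v z : W} {k j : B}
    (hvdes : ∀ i : B, cs.length (v * cs.simple i) < cs.length v → i = k)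
    (hjk : j ≠ k) (hgt : cs.length z < cs.length (z * cs.simple j))
    (h : cs.bruhatLE v (z * cs.simple j)) : cs.bruhatLE v z := by
  intro ω hred hprod
  have hlenj : cs.length (z * cs.simple j) = cs.length z + 1 := by
    rcases cs.length_mul_simple z j with h1 | h1 <;> omega
  have hredj : cs.IsReduced (ω ++ [j]) := by
    rw [CoxeterSystem.IsReduced, cs.wordProd_append, cs.wordProd_singleton, ← hprod, hlenj,
      List.length_append, List.length_singleton]
    rw [CoxeterSystem.IsReduced] at hred
    rw [← hprod] at hred
    omega
  have hprodj : z * cs.simple j = cs.wordProd (ω ++ [j]) := by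
    rw [cs.wordProd_append, cs.wordProd_singleton, ← hprod]
  obtain ⟨φ, hφsub, hφred, hφprod⟩ := h (ω ++ [j]) hredj hprodj
  rcases sublist_concat_cases hφsub with hcase | ⟨φ', heq, hsub'⟩
  · exact ⟨φ, hcase, hφred, hφprod⟩
  · exfalso
    have hv : v * cs.simple j = cs.wordProd φ' := by
      rw [hφprod, heq, cs.wordProd_append, cs.wordProd_singleton,
        cs.simple_mul_simple_cancel_right]
    have hlen1 : cs.length (v * cs.simple j) ≤ φ'.length := by
      rw [hv]; exact cs.length_wordProd_le φ'
    have hlen2 : φ.length = φ'.length + 1 := by rw [heq, List.length_append]; simp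
    have hlen3 : cs.length v = φ.length := by
      rw [CoxeterSystem.IsReduced] at hφred
      rw [hφprod]; exact hφred
    have : cs.length (v * cs.simple j) < cs.length v := by omega
    exact hjk (hvdes j this)

theorem bruhatLE_cancel_word {v : W} {k : B}
    (hvdes : ∀ i : B, cs.length (v * cs.simple i) < cs.length v → i = k) :
    ∀ l : List B, (∀ i ∈ l, i ≠ k) → ∀ c : W,
      cs.bruhatLE v (c * cs.wordProd l) → cs.bruhatLE v c := by
  intro l
  induction l with
  | nil =>
    intro _ c h
    rwa [cs.wordProd_nil, mul_one] at h
  | cons j l' ih =>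
    intro hl c h
    rw [cs.wordProd_cons, ← mul_assoc] at h
    have hj : j ≠ k := hl j (List.mem_cons_self (a := j) (l := l'))
    have h2 : cs.bruhatLE v (c * cs.simple j) :=
      ih (fun i hi => hl i (List.mem_cons_of_mem j hi)) (c * cs.simple j) h
    rcases Nat.lt_or_ge (cs.length (c * cs.simple j)) (cs.length c) with hlt | hge
    · exact bruhatLE_of_descent cs hlt h2
    · have hne := cs.length_mul_simple_ne c j
      have hgt : cs.length c < cs.length (c * cs.simple j) := by omega
      exact bruhatLE_of_ascent cs hvdes hj hgt h2

theorem exists_word_of_mem_closure {k : B} {y : W}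
    (hy : y ∈ Subgroup.closure (cs.simple '' {i | i ≠ k})) :
    ∃ l : List B, (∀ i ∈ l, i ≠ k) ∧ y = cs.wordProd l := by
  induction hy using Subgroup.closure_induction with
  | mem g hg =>
    obtain ⟨i, hi, rfl⟩ := hg
    exact ⟨[i], by simpa using hi, (cs.wordProd_singleton i).symm⟩
  | one => exact ⟨[], by simp, by simp⟩
  | mul a b _ _ iha ihb =>
    obtain ⟨l1, h1, rfl⟩ := iha
    obtain ⟨l2, h2, rfl⟩ := ihb
    refine ⟨l1 ++ l2, ?_, (cs.wordProd_append l1 l2).symm⟩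
    intro i hi
    rcases List.mem_append.mp hi with h | h
    · exact h1 i h
    · exact h2 i h
  | inv a _ iha =>
    obtain ⟨l, h1, rfl⟩ := iha
    refine ⟨l.reverse, ?_, (cs.wordProd_reverse l).symm⟩
    intro i hi
    exact h1 i (List.mem_reverse.mp hi)

end BruhatLemmas

end CoxAux


open CoxAux

theorem annex_mul_simple_eq {B W : Type*} [Group W] {M : CoxeterMatrix B}
    (cs : CoxeterSystem M W) (w : W) (k : B) (hw1 : w ≠ 1)
    (hk : cs.length (w * cs.simple k) > cs.length w)
    (hdes : ∀ i : B, cs.length (w * cs.simple k * cs.simple i) <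
      cs.length (w * cs.simple k) ↔ i = k) :
    cs.annex (w * cs.simple k) =
      {z | ∃ x y : W, x ∈ cs.annex w ∧
        y ∈ Subgroup.closure (cs.simple '' {i | i ≠ k}) ∧ z = x * y} := by
  have hvdes : ∀ i : B, cs.length (w * cs.simple k * cs.simple i) <
      cs.length (w * cs.simple k) → i = k := fun i hi => (hdes i).mp hi
  have hvlen : cs.length (w * cs.simple k) = cs.length w + 1 := by
    rcases cs.length_mul_simple w k with h1 | h1 <;> omega
  have hwv : cs.bruhatLE w (w * cs.simple k) := bruhatLE_mul_simple_right cs hk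
  ext z
  simp only [CoxeterSystem.annex, Set.mem_setOf_eq]
  constructor
  · -- annex v ⊆ annex w * W_J
    have main : ∀ n : ℕ, ∀ z : W, cs.length z = n → ¬ cs.bruhatLE (w * cs.simple k) z →
        ∃ x y : W, ¬ cs.bruhatLE w x ∧ y ∈ Subgroup.closure (cs.simple '' {i | i ≠ k}) ∧
          z = x * y := by
      intro n
      induction n using Nat.strong_induction_on with
      | _ n ih =>
        intro z hzlen hvz
        by_cases hex : ∃ j, j ≠ k ∧ cs.length (z * cs.simple j) < cs.length z
        · obtain ⟨j, hjk, hdesc⟩ := hex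
          have hz' : ¬ cs.bruhatLE (w * cs.simple k) (z * cs.simple j) := by
            intro hc
            exact hvz (bruhatLE_of_descent cs hdesc hc)
          obtain ⟨x, y, hx, hy, hzy⟩ :=
            ih (cs.length (z * cs.simple j)) (by omega) _ rfl hz'
          refine ⟨x, y * cs.simple j, hx, ?_, ?_⟩
          · exact Subgroup.mul_mem _ hy (Subgroup.subset_closure ⟨j, hjk, rfl⟩)
          · rw [← mul_assoc, ← hzy, cs.simple_mul_simple_cancel_right]
        · push_neg at hex
          refine ⟨z, 1, ?_, Subgroup.one_mem _, (mul_one z).symm⟩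
          intro hwz
          by_cases hz1 : z = 1
          · subst hz1
            exact hw1 (eq_one_of_bruhatLE_one cs hwz)
          · refine hvz ?_
            intro ω hred hprod
            have hωne : ω ≠ [] := by
              intro hnil
              apply hz1
              rw [hprod, hnil, cs.wordProd_nil]
            obtain ⟨β, d, hβ⟩ : ∃ β d, ω = β ++ [d] := by
              rcases List.eq_nil_or_concat ω with h1 | ⟨β, d, h1⟩
              · exact absurd h1 hωne
              · exact ⟨β, d, by rw [h1, List.concat_eq_append]⟩
            subst hβ
            have hprodβ : cs.wordProd (β ++ [d]) = cs.wordProd β * cs.simple d := by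
              rw [cs.wordProd_append, cs.wordProd_singleton]
            have hzd : z * cs.simple d = cs.wordProd β := by
              rw [hprod, hprodβ, cs.simple_mul_simple_cancel_right]
            have hzlen' : cs.length z = β.length + 1 := by
              rw [CoxeterSystem.IsReduced] at hred
              rw [hprod, hred, List.length_append, List.length_singleton]
            have hd : cs.length (z * cs.simple d) < cs.length z := by
              have := cs.length_wordProd_le β
              rw [← hzd] at this
              omega
            have hdk : d = k := by
              by_contra hne
              exact absurd hd (not_lt.mpr (hex d hne))
            rw [hdk] at hred hprod hzd hd ⊢
            have hβred : cs.IsReduced β := by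
              have h1 := cs.length_wordProd_le β
              have h2 : cs.length (z * cs.simple k) = cs.length (cs.wordProd β) := by
                rw [hzd]
              have h3 := cs.length_mul_simple z k
              rw [CoxeterSystem.IsReduced]
              omega
            obtain ⟨φ, hφsub, hφred, hφprod⟩ := hwz (β ++ [k]) hred hprod
            rcases sublist_concat_cases hφsub with hcase | ⟨φ', heq, hsub'⟩
            · refine ⟨φ ++ [k], hcase.append (List.Sublist.refl [k]), ?_, ?_⟩
              · rw [CoxeterSystem.IsReduced, cs.wordProd_append, cs.wordProd_singleton,
                  ← hφprod, hvlen, List.length_append, List.length_singleton]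
                rw [CoxeterSystem.IsReduced] at hφred
                rw [← hφprod] at hφred
                omega
              · rw [cs.wordProd_append, cs.wordProd_singleton, ← hφprod]
            · exfalso
              have hw' : w * cs.simple k = cs.wordProd φ' := by
                rw [hφprod, heq, cs.wordProd_append, cs.wordProd_singleton,
                  cs.simple_mul_simple_cancel_right]
              have h1 : cs.length (w * cs.simple k) ≤ φ'.length := by
                rw [hw']; exact cs.length_wordProd_le φ'
              have h2 : φ.length = φ'.length + 1 := by
                rw [heq, List.length_append, List.length_singleton]
              have h3 : cs.length w = φ.length := by
                rw [CoxeterSystem.IsReduced] at hφred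
                rw [hφprod]; exact hφred
              omega
    exact fun hvz => main (cs.length z) z rfl hvz
  · rintro ⟨x, y, hx, hy, rfl⟩ h
    obtain ⟨l, hl, rfl⟩ := exists_word_of_mem_closure cs hy
    have hvx : cs.bruhatLE (w * cs.simple k) x :=
      bruhatLE_cancel_word cs hvdes l hl x h
    exact hx (bruhatLE_trans cs hwv hvx)
end

section
/- Let (W,S) be a Coxeter system, x ∈ W, and w ∈ W_0 a standard parabolic subgroup such that z ∈ W is of minimal length in the coset W_0·z (so that ℓ(wz) = ℓ(w) + ℓ(z) for all w ∈ W_0). If every reduced expression of x begins with a simple generator s_0 not in the generating set of W_0, then x ≤ wz implies x ≤ z. -/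
namespace BruhatAux

open List CoxeterSystem

open scoped Classical

variable {B W : Type*} [Group W] {M : CoxeterMatrix B} (cs : CoxeterSystem M W)

local prefix:100 "s" => cs.simple
local prefix:100 "π" => cs.wordProd
local prefix:100 "ℓ" => cs.length

private lemma zmod2_add_self : ∀ x : ZMod 2, x + x = 0 := by decide

private lemma conj_conj (i : B) (t : W) : s i * (s i * t * s i) * s i = t := by
  have h := cs.simple_mul_simple_self i
  calc s i * (s i * t * s i) * s i = (s i * s i) * t * (s i * s i) := by group
  _ = t := by rw [h, one_mul, mul_one]

private lemma group_shift (a b u v : W) : a * u * b = v ↔ u = a⁻¹ * v * b⁻¹ := by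
  constructor
  · rintro rfl; group
  · rintro rfl; group

private lemma simple_conj_eq_iff (i : B) (t u : W) :
    s i * t * s i = u ↔ t = s i * u * s i := by
  constructor
  · rintro rfl; exact (conj_conj cs i t).symm
  · rintro rfl; exact conj_conj cs i u

/-- The Tits parity map, as a function. -/
noncomputable def pA (i : B) : W × ZMod 2 → W × ZMod 2 :=
  fun p => (s i * p.1 * s i, p.2 + if p.1 = s i then 1 else 0)

private lemma pA_involutive (i : B) : Function.Involutive (pA cs i) := by
  rintro ⟨t, e⟩
  simp only [pA]
  rw [Prod.mk.injEq]
  constructor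
  · exact conj_conj cs i t
  · rcases eq_or_ne t (s i) with rfl | h
    · show e + (if s i = s i then (1 : ZMod 2) else 0) +
          (if s i * s i * s i = s i then 1 else 0) = e
      rw [if_pos rfl, if_pos (by rw [cs.simple_mul_simple_self, one_mul]), add_assoc,
        zmod2_add_self, add_zero]
    · show e + (if t = s i then (1 : ZMod 2) else 0) +
          (if s i * t * s i = s i then 1 else 0) = e
      rw [if_neg h, if_neg (fun hc => h ((simple_conj_eq_iff cs i t (s i)).mp hc ▸ by
        rw [cs.simple_mul_simple_self, one_mul])), add_zero, add_zero]

/-- The Tits parity map, as a permutation. -/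
noncomputable def pPerm (i : B) : Equiv.Perm (W × ZMod 2) :=
  Function.Involutive.toPerm _ (pA_involutive cs i)

private lemma pPerm_apply (i : B) (t : W) (e : ZMod 2) :
    pPerm cs i (t, e) = (s i * t * s i, e + if t = s i then 1 else 0) := rfl

private lemma pPerm_mul_pow_apply (i j : B) (k : ℕ) (t : W) (e : ZMod 2) :
    ((pPerm cs i * pPerm cs j) ^ k) (t, e) =
      ((s i * s j) ^ k * t * (s j * s i) ^ k,
        e + ∑ l ∈ Finset.range (2 * k),
          if t = (s j * s i) ^ l * s j then (1 : ZMod 2) else 0) := by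
  induction k generalizing t e with
  | zero => simp
  | succ k ih =>
    rw [pow_succ, Equiv.Perm.mul_apply, Equiv.Perm.mul_apply, pPerm_apply, pPerm_apply, ih]
    have h2k : 2 * (k + 1) = 2 + 2 * k := by ring
    rw [h2k, Finset.sum_range_add, Finset.sum_range_succ, Finset.sum_range_one, pow_zero,
      one_mul, pow_one]
    rw [Prod.mk.injEq]
    constructor
    · rw [pow_succ, pow_succ',
        show s i * (s j * t * s j) * s i = (s i * s j) * (t * (s j * s i)) by group]
      simp only [mul_assoc]
    · have hA : (s j * t * s j = s i) ↔ (t = s j * s i * s j) :=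
        simple_conj_eq_iff cs j t (s i)
      have hC : ∀ l : ℕ, (s i * (s j * t * s j) * s i = (s j * s i) ^ l * s j) ↔
          (t = (s j * s i) ^ (2 + l) * s j) := by
        intro l
        have e1 : s i * (s j * t * s j) * s i = (s i * s j) * t * (s j * s i) := by group
        rw [e1, group_shift]
        have e2 : (s i * s j)⁻¹ * ((s j * s i) ^ l * s j) * (s j * s i)⁻¹ =
            (s j * s i) ^ (2 + l) * s j := by
          simp only [mul_inv_rev, cs.inv_simple]
          have e3 : (s j * s i) ^ (2 + l) = (s j * s i) * ((s j * s i) ^ l * (s j * s i)) := by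
            rw [show 2 + l = l + 1 + 1 from by omega, ← pow_succ, ← pow_succ']
          rw [e3]
          simp only [mul_assoc]
        rw [e2]
      have hsum : (∑ l ∈ Finset.range (2 * k),
            if s i * (s j * t * s j) * s i = (s j * s i) ^ l * s j then (1 : ZMod 2) else 0)
          = ∑ l ∈ Finset.range (2 * k),
            if t = (s j * s i) ^ (2 + l) * s j then (1 : ZMod 2) else 0 :=
        Finset.sum_congr rfl fun l _ => if_congr (hC l) rfl rfl
      rw [hsum, if_congr hA rfl rfl]
      ring

private lemma pPerm_liftable : M.IsLiftable (fun i => pPerm cs i) := by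
  intro i j
  apply Equiv.ext
  rintro ⟨t, e⟩
  rw [show ((fun i => pPerm cs i) i * (fun i => pPerm cs i) j) = pPerm cs i * pPerm cs j from rfl]
  rw [pPerm_mul_pow_apply, cs.simple_mul_simple_pow, cs.simple_mul_simple_pow',
    Equiv.Perm.one_apply]
  rw [Prod.mk.injEq]
  refine ⟨by rw [one_mul, mul_one], ?_⟩
  rw [two_mul, Finset.sum_range_add]
  have hper : ∀ l ∈ Finset.range (M i j),
      (if t = (s j * s i) ^ (M i j + l) * s j then (1 : ZMod 2) else 0)
        = (if t = (s j * s i) ^ l * s j then (1 : ZMod 2) else 0) := by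
    intro l _
    rw [pow_add, cs.simple_mul_simple_pow', one_mul]
  rw [Finset.sum_congr rfl hper, zmod2_add_self, add_zero]

/-- The Tits parity representation. -/
noncomputable def pRepr : W →* Equiv.Perm (W × ZMod 2) :=
  cs.lift ⟨fun i => pPerm cs i, pPerm_liftable cs⟩

private lemma pRepr_simple (i : B) : pRepr cs (s i) = pPerm cs i :=
  cs.lift_apply_simple (pPerm_liftable cs) i

/-- Parity-valued count of `t` in a list. -/
noncomputable def nuF (t : W) (l : List W) : ZMod 2 :=
  (l.map fun u => if u = t then (1 : ZMod 2) else 0).sum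

private lemma nuF_nil (t : W) : nuF t ([] : List W) = 0 := rfl

private lemma nuF_cons (t c : W) (l : List W) :
    nuF t (c :: l) = (if c = t then (1 : ZMod 2) else 0) + nuF t l := by
  simp [nuF]

private lemma nuF_append (t : W) (l₁ l₂ : List W) :
    nuF t (l₁ ++ l₂) = nuF t l₁ + nuF t l₂ := by
  simp [nuF]

private lemma nuF_eq_zero {t : W} {l : List W} (h : t ∉ l) : nuF t l = 0 := by
  induction l with
  | nil => rfl
  | cons c l ih =>
    simp only [List.mem_cons, not_or] at h
    rw [nuF_cons, if_neg (fun hc => h.1 hc.symm), ih h.2, add_zero]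

private lemma pRepr_wordProd (ω : List B) (t : W) (e : ZMod 2) :
    pRepr cs (π ω) (t, e) =
      (π ω * t * (π ω)⁻¹, e + nuF t (cs.rightInvSeq ω)) := by
  induction ω generalizing t e with
  | nil => simp [nuF_nil]
  | cons i ω ih =>
    rw [wordProd_cons, map_mul, Equiv.Perm.mul_apply, ih, pRepr_simple, pPerm_apply]
    have hris : cs.rightInvSeq (i :: ω) = ((π ω)⁻¹ * (s i) * π ω) :: cs.rightInvSeq ω := rfl
    rw [hris, nuF_cons, Prod.mk.injEq]
    constructor
    · rw [mul_inv_rev, cs.inv_simple]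
      group
    · have hiff : (π ω * t * (π ω)⁻¹ = s i) ↔ ((π ω)⁻¹ * (s i) * π ω = t) := by
        constructor
        · intro h; rw [← h]; group
        · intro h; rw [← h]; group
      rw [if_congr hiff rfl rfl]
      ring

/-- Membership of a simple reflection in the right inversion sequence of a reduced word,
given that it is a right descent. -/
private lemma mem_ris_of_descent {ω : List B} (hω : cs.IsReduced ω) {i : B}
    (h : ℓ (π ω * s i) < ℓ (π ω)) : s i ∈ cs.rightInvSeq ω := by
  by_contra hmem
  obtain ⟨β, hβred, hβ⟩ := cs.exists_reduced_word' (π ω * s i)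
  have hprod : π (β.concat i) = π ω := by
    rw [wordProd_concat, ← hβ, cs.simple_mul_simple_cancel_right]
  have h1 := pRepr_wordProd cs (β.concat i) (s i) 0
  have h2 := pRepr_wordProd cs ω (s i) 0
  rw [hprod] at h1
  rw [h1] at h2
  have h3 := congrArg Prod.snd h2
  simp only at h3
  have hν1 : nuF (s i) (cs.rightInvSeq (β.concat i)) = 1 := by
    rw [cs.rightInvSeq_concat]
    have hnot : (s i) ∉ List.map (⇑(MulAut.conj (s i))) (cs.rightInvSeq β) := by
      intro hmem2
      obtain ⟨u, hu, huc⟩ := List.mem_map.mp hmem2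
      have hfix : (MulAut.conj (s i)) (s i) = s i := by
        rw [MulAut.conj_apply, cs.inv_simple, cs.simple_mul_simple_cancel_right]
      have hu2 : u = s i := (MulAut.conj (s i)).injective (huc.trans hfix.symm)
      rw [hu2] at hu
      have h4 := (cs.isRightInversion_of_mem_rightInvSeq hβred hu).2
      rw [← hβ, cs.simple_mul_simple_cancel_right] at h4
      omega
    rw [List.concat_eq_append, nuF_append, nuF_eq_zero hnot, nuF_cons, nuF_nil, if_pos rfl]
    ring
  have hν2 : nuF (s i) (cs.rightInvSeq ω) = 0 := nuF_eq_zero hmem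
  rw [hν1, hν2] at h3
  simp at h3

/-- The exchange property. -/
private lemma exchange {ω : List B} (hω : cs.IsReduced ω) {i : B}
    (h : ℓ (π ω * s i) < ℓ (π ω)) :
    ∃ k < ω.length, π ω * s i = π (ω.eraseIdx k) := by
  have hmem := mem_ris_of_descent cs hω h
  obtain ⟨k, hk, hkeq⟩ := List.mem_iff_getElem.mp hmem
  refine ⟨k, by simpa using hk, ?_⟩
  rw [← cs.wordProd_mul_getD_rightInvSeq ω k]
  congr 1
  rw [List.getD_eq_getElem _ _ hk, hkeq]

/-- The deletion property: every word contains a reduced sublist with the same product. -/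
private lemma exists_reduced_sublist :
    ∀ (n : ℕ) (ω : List B), ω.length ≤ n →
      ∃ ω', ω'.Sublist ω ∧ cs.IsReduced ω' ∧ π ω' = π ω := by
  intro n
  induction n with
  | zero =>
    intro ω hω
    have hnil : ω = [] := List.eq_nil_of_length_eq_zero (Nat.le_zero.mp hω)
    subst hnil
    exact ⟨[], List.Sublist.refl _, by simp [CoxeterSystem.IsReduced], rfl⟩
  | succ n ih =>
    intro ω hlen
    by_cases hred : cs.IsReduced ω
    · exact ⟨ω, List.Sublist.refl ω, hred, rfl⟩
    · have hne : ω ≠ [] := by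
        rintro rfl
        exact hred (by simp [CoxeterSystem.IsReduced])
      have hpos : 0 < ω.length := List.length_pos_iff.mpr hne
      have hex : ∃ k, ¬ cs.IsReduced (ω.take (k + 1)) :=
        ⟨ω.length - 1, by rwa [show ω.length - 1 + 1 = ω.length by omega, List.take_length]⟩
      set k := Nat.find hex with hkdef
      have hk : ¬ cs.IsReduced (ω.take (k + 1)) := Nat.find_spec hex
      have hklen : k < ω.length := by
        have h1 : k ≤ ω.length - 1 := Nat.find_min' hex
          (by rwa [show ω.length - 1 + 1 = ω.length by omega, List.take_length])
        omega
      have hkred : cs.IsReduced (ω.take k) := by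
        rcases Nat.eq_zero_or_pos k with h0 | h0
        · rw [h0]
          simp [CoxeterSystem.IsReduced]
        · have hmin := Nat.find_min hex (show k - 1 < k by omega)
          rw [not_not] at hmin
          rwa [show k - 1 + 1 = k by omega] at hmin
      set i := ω[k] with hidef
      have htake : ω.take (k + 1) = ω.take k ++ [i] := by
        rw [List.take_succ, List.getElem?_eq_getElem hklen]
        rfl
      have hlen_take : (ω.take k).length = k := by
        rw [List.length_take]
        omega
      have hprod_take : π (ω.take (k + 1)) = π (ω.take k) * s i := by
        rw [htake, wordProd_append, wordProd_singleton]
      have hlred : ℓ (π (ω.take k)) = k := by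
        have := hkred
        unfold CoxeterSystem.IsReduced at this
        rw [this, hlen_take]
      have hdesc : ℓ (π (ω.take k) * s i) < ℓ (π (ω.take k)) := by
        rcases cs.length_mul_simple (π (ω.take k)) i with hup | hdn
        · exfalso
          apply hk
          unfold CoxeterSystem.IsReduced
          rw [hprod_take, hup, hlred, List.length_take]
          omega
        · omega
      obtain ⟨l, hl, hexch⟩ := exchange cs hkred hdesc
      set ω₂ := (ω.take k).eraseIdx l ++ ω.drop (k + 1) with hω₂
      have hsub2 : ω₂.Sublist ω := by
        have h1 : ((ω.take k).eraseIdx l).Sublist (ω.take k) := List.eraseIdx_sublist _ l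
        have h2 : (ω.take k).Sublist (ω.take (k + 1)) := by
          rw [htake]
          exact List.sublist_append_left _ _
        have h3 : ω₂.Sublist (ω.take (k + 1) ++ ω.drop (k + 1)) :=
          List.Sublist.append (h1.trans h2) (List.Sublist.refl _)
        rwa [List.take_append_drop] at h3
      have hprod2 : π ω₂ = π ω := by
        rw [hω₂, wordProd_append, ← hexch, ← hprod_take, ← wordProd_append,
          List.take_append_drop]
      have hlen2 : ω₂.length ≤ n := by
        have e1 : ((ω.take k).eraseIdx l).length + 1 = k := by
          rw [List.length_eraseIdx_add_one hl, hlen_take]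
        have e2 : (ω.drop (k + 1)).length = ω.length - (k + 1) := List.length_drop
        rw [hω₂, List.length_append]
        omega
      obtain ⟨ω', h1, h2, h3⟩ := ih ω₂ hlen2
      exact ⟨ω', h1.trans hsub2, h2, by rw [h3, hprod2]⟩

/-- Every element of a standard parabolic subgroup has a reduced word over `J`. -/
private lemma exists_reduced_word_over (J : Set B) (w : W)
    (hw : w ∈ Subgroup.closure (cs.simple '' J)) :
    ∃ τ : List B, (∀ i ∈ τ, i ∈ J) ∧ cs.IsReduced τ ∧ w = π τ := by
  have hword : ∃ τ : List B, (∀ i ∈ τ, i ∈ J) ∧ w = π τ := by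
    induction hw using Subgroup.closure_induction with
    | mem x hx =>
      obtain ⟨i, hi, rfl⟩ := hx
      exact ⟨[i], by simpa using hi, (cs.wordProd_singleton i).symm⟩
    | one => exact ⟨[], by simp, (cs.wordProd_nil).symm⟩
    | mul a b ha hb iha ihb =>
      obtain ⟨τ₁, h1, rfl⟩ := iha
      obtain ⟨τ₂, h2, rfl⟩ := ihb
      refine ⟨τ₁ ++ τ₂, ?_, (cs.wordProd_append τ₁ τ₂).symm⟩
      intro i hi
      rcases List.mem_append.mp hi with h | h
      · exact h1 i h
      · exact h2 i h
    | inv a ha iha =>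
      obtain ⟨τ, h1, rfl⟩ := iha
      exact ⟨τ.reverse, fun i hi => h1 i (List.mem_reverse.mp hi),
        (cs.wordProd_reverse τ).symm⟩
  obtain ⟨τ, hJ, rfl⟩ := hword
  obtain ⟨τ', hsub, hred, hprod⟩ := exists_reduced_sublist cs τ.length τ le_rfl
  exact ⟨τ', fun i hi => hJ i (hsub.subset hi), hred, hprod.symm⟩

end BruhatAux

theorem bruhatLE_of_bruhatLE_mul_minimal {B W : Type*} [Group W] {M : CoxeterMatrix B}
    (cs : CoxeterSystem M W) (J : Set B) (b0 : B) (hb0 : b0 ∉ J)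
    (x z : W)
    (hmin : ∀ w ∈ Subgroup.closure (cs.simple '' J),
      cs.length (w * z) = cs.length w + cs.length z)
    (hx : ∀ i ∈ J, cs.length (cs.simple i * x) > cs.length x) :
    ∀ w ∈ Subgroup.closure (cs.simple '' J),
      cs.bruhatLE x (w * z) → cs.bruhatLE x z := by
  intro w hw hbr ω hωred hz
  obtain ⟨τ, hτJ, hτred, hτ⟩ := BruhatAux.exists_reduced_word_over cs J w hw
  have hlw : cs.length w = τ.length := by rw [hτ]; exact hτred
  have hlz : cs.length z = ω.length := by rw [hz]; exact hωred
  have hτω_red : cs.IsReduced (τ ++ ω) := by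
    unfold CoxeterSystem.IsReduced
    rw [cs.wordProd_append, ← hτ, ← hz, hmin w hw, hlw, hlz, List.length_append]
  have hprod : w * z = cs.wordProd (τ ++ ω) := by
    rw [cs.wordProd_append, ← hτ, ← hz]
  obtain ⟨ω', hsub, hred', hxval⟩ := hbr (τ ++ ω) hτω_red hprod
  obtain ⟨τ', ω'', rfl, hsτ, hsω⟩ := List.sublist_append_iff.mp hsub
  cases τ' with
  | nil => exact ⟨ω'', hsω, hred', hxval⟩
  | cons i rest =>
    exfalso
    have hiJ : i ∈ J := hτJ i (hsτ.subset List.mem_cons_self)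
    have hx1 : x = cs.simple i * cs.wordProd (rest ++ ω'') := by
      rw [hxval]
      rw [show (i :: rest) ++ ω'' = i :: (rest ++ ω'') from rfl, cs.wordProd_cons]
    have hlx : cs.length x = (rest ++ ω'').length + 1 := by
      rw [hxval]
      have := hred'
      unfold CoxeterSystem.IsReduced at this
      rw [this]
      simp only [List.length_append, List.cons_append, List.length_cons]
      try omega
    have hsx : cs.length (cs.simple i * x) ≤ (rest ++ ω'').length := by
      rw [hx1, cs.simple_mul_simple_cancel_left]
      exact cs.length_wordProd_le _
    have := hx i hiJ
    omega
end

section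
/- Let E be a Euclidean space, α and β nonzero vectors with ⟨α,β⟩ < 0, and n, m ≥ 0 real numbers (with ⟨α∨,β⟩ an integer, coming from a root system). Let r be the reflection r(x) = x − (⟨x,α⟩ − n)α∨. Then the image r(H_{β,m}) equals H_{β − ⟨α∨,β⟩α, t} with t = m − ⟨α∨,β⟩n ≥ 0, and for any v with ⟨α,v⟩ > n and ⟨β,v⟩ > m we have ⟨β − ⟨α∨,β⟩α, r(v)⟩ > t. In particular, if t > 0 then the hyperplane r(H_{β,m}) separates r(v) from the origin. -/
/-! Write `c = ⟪α∨, β⟫` and `δ = β - c • α`. Expanding the definition of `r` gives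
`⟪r x, β⟫ = ⟪x, δ⟫ + c * n` for every `x`, and `r` is an involution because `⟪α∨, α⟫ = 2`.
Hence `r` maps `H_{β,m}` onto its preimage `H_{δ, m - c n}`, and `⟪δ, r v⟫ = ⟪v, β⟫ - c n`.
Finally `c < 0` since `⟪α, β⟫ < 0`, so `t = m - c n ≥ m ≥ 0`. -/

open scoped RealInnerProductSpace

namespace RootHyperplane

variable {E : Type*} [NormedAddCommGroup E] [InnerProductSpace ℝ E]

noncomputable def coroot (α : E) : E := (2 / ⟪α, α⟫) • α

theorem inner_coroot_self {α : E} (hα : α ≠ 0) : ⟪coroot α, α⟫ = 2 := by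
  have : ⟪α, α⟫ ≠ 0 := inner_self_ne_zero.2 hα
  rw [coroot, real_inner_smul_left, div_mul_cancel₀ _ this]

theorem inner_coroot_neg {α β : E} (hab : ⟪α, β⟫ < 0) : ⟪coroot α, β⟫ < 0 := by
  have hα : α ≠ 0 := by
    rintro rfl
    simp at hab
  have : 0 < ⟪α, α⟫ := real_inner_self_pos.2 hα
  rw [coroot, real_inner_smul_left]
  exact mul_neg_of_pos_of_neg (by positivity) hab

def affineReflection (α αv : E) (n : ℝ) (x : E) : E := x - (⟪x, α⟫ - n) • αv

theorem affineReflection_involutive {α αv : E} (h : ⟪αv, α⟫ = 2) (n : ℝ) :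
    Function.Involutive (affineReflection α αv n) := by
  intro x
  have hα : ⟪affineReflection α αv n x, α⟫ - n = -(⟪x, α⟫ - n) := by
    rw [affineReflection, inner_sub_left, real_inner_smul_left, h]
    ring
  rw [affineReflection, hα, neg_smul, sub_neg_eq_add, affineReflection, sub_add_cancel]

theorem inner_affineReflection_left (α αv β : E) (n : ℝ) (x : E) :
    ⟪affineReflection α αv n x, β⟫ = ⟪x, β - ⟪αv, β⟫ • α⟫ + ⟪αv, β⟫ * n := by
  simp only [affineReflection, inner_sub_left, inner_sub_right, real_inner_smul_left,
    real_inner_smul_right]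
  ring

end RootHyperplane

open RootHyperplane in
theorem reflected_hyperplane_separates_general {E : Type*} [NormedAddCommGroup E]
    [InnerProductSpace ℝ E] (α β : E) (hα : α ≠ 0)
    (hab : ⟪α, β⟫ < 0) (n m : ℝ) (hn : 0 ≤ n) (hm : 0 ≤ m) :
    let αv : E := (2 / ⟪α, α⟫) • α
    let r : E → E := fun x => x - (⟪x, α⟫ - n) • αv
    let δ : E := β - ⟪αv, β⟫ • α
    let t : ℝ := m - ⟪αv, β⟫ * n
    r '' {x | ⟪x, β⟫ = m} = {x | ⟪x, δ⟫ = t} ∧ 0 ≤ t ∧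
      ∀ v : E, ⟪α, v⟫ > n → ⟪β, v⟫ > m → ⟪δ, r v⟫ > t := by
  intro αv r δ t
  have hr : Function.Involutive r := affineReflection_involutive (inner_coroot_self hα) n
  have hrβ : ∀ x, ⟪r x, β⟫ = ⟪x, δ⟫ + ⟪αv, β⟫ * n := inner_affineReflection_left α αv β n
  have hc : ⟪αv, β⟫ < 0 := inner_coroot_neg hab
  refine ⟨?_, ?_, ?_⟩
  · rw [Function.Involutive.image_eq_preimage_symm hr]
    ext x
    rw [Set.mem_preimage, Set.mem_ofPred, Set.mem_ofPred, hrβ]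
    exact eq_sub_iff_add_eq.symm
  · linarith [mul_nonpos_of_nonpos_of_nonneg hc.le hn]
  · intro v _ hv
    have hδ := hrβ (r v)
    rw [hr v] at hδ
    rw [real_inner_comm] at hv ⊢
    linarith

theorem reflected_hyperplane_separates {E : Type*} [NormedAddCommGroup E]
    [InnerProductSpace ℝ E] (α β : E) (hα : α ≠ 0) (hβ : β ≠ 0)
    (hab : ⟪α, β⟫ < 0) (n m : ℝ) (hn : 0 ≤ n) (hm : 0 ≤ m)
    (hint : ∃ z : ℤ, ⟪(2 / ⟪α, α⟫) • α, β⟫ = (z : ℝ)) :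
    let αv : E := (2 / ⟪α, α⟫) • α
    let r : E → E := fun x => x - (⟪x, α⟫ - n) • αv
    let δ : E := β - ⟪αv, β⟫ • α
    let t : ℝ := m - ⟪αv, β⟫ * n
    r '' {x | ⟪x, β⟫ = m} = {x | ⟪x, δ⟫ = t} ∧ 0 ≤ t ∧
      ∀ v : E, ⟪α, v⟫ > n → ⟪β, v⟫ > m → ⟪δ, r v⟫ > t :=
  reflected_hyperplane_separates_general α β hα hab n m hn hm
end

section
/- Let (W,S) be a Coxeter system, w ∈ W with w ≠ 1, and let s ∈ S with ℓ(ws) > ℓ(w). If x ∈ W satisfies w ≤ x but ws ≰ x, then any reduced word for x has the following property: taking a prefix-minimal reduced factorization x = y·y' with w ≤ y and y minimal (with respect to length among prefixes containing w as a subword), the element y does not end in s, and y' lies in the standard parabolic subgroup generated by S ∖ {s}. -/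
open List
open scoped Classical

namespace BruhatAux

variable {B : Type*} {W : Type*} [Group W] {M : CoxeterMatrix B} (cs : CoxeterSystem M W)

local prefix:100 "σ" => cs.simple
local prefix:100 "π" => cs.wordProd
local prefix:100 "ℓ" => cs.length

/-- Indicator function valued in `Multiplicative (ZMod 2)`. -/
noncomputable def ind (w : W) : W → Multiplicative (ZMod 2) := fun t => if t = w then Multiplicative.ofAdd 1 else 1

lemma mulA_self (a : W → Multiplicative (ZMod 2)) : a * a = 1 := by
  funext t
  show a t * a t = 1
  have : ∀ x : Multiplicative (ZMod 2), x * x = 1 := by decide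
  exact this (a t)

/-- Conjugation action of `W` on functions `W → ZMod 2`. -/
def conjA (u : W) : (W → Multiplicative (ZMod 2)) ≃* (W → Multiplicative (ZMod 2)) where
  toFun a := fun t => a (u⁻¹ * t * u)
  invFun a := fun t => a (u * t * u⁻¹)
  left_inv a := by funext t; group
  right_inv a := by funext t; group
  map_mul' a b := rfl

def conjAct : W →* MulAut (W → Multiplicative (ZMod 2)) where
  toFun := conjA
  map_one' := by ext a t; simp [conjA]
  map_mul' u v := by ext a t; simp [conjA, mul_assoc]

lemma conjAct_ind (u w : W) : conjAct u (ind w) = ind (u * w * u⁻¹) := by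
  funext t
  show (if u⁻¹ * t * u = w then _ else _) = (if t = u * w * u⁻¹ then _ else _)
  have : (u⁻¹ * t * u = w) ↔ (t = u * w * u⁻¹) := by
    constructor
    · intro h; rw [← h]; group
    · intro h; rw [h]; group
  rw [if_congr this rfl rfl]

end BruhatAux

namespace BruhatAux

variable {B : Type*} {W : Type*} [Group W] {M : CoxeterMatrix B} (cs : CoxeterSystem M W)

local prefix:100 "σ" => cs.simple
local prefix:100 "π" => cs.wordProd
local prefix:100 "ℓ" => cs.length

section Invol

variable {u v : W}

omit [Group W] in
example : True := trivial

lemma pow_uv_inv (hu : u * u = 1) (hv : v * v = 1) (k : ℕ) :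
    ((u * v) ^ k)⁻¹ = u * (u * v) ^ k * u := by
  have hu' : u⁻¹ = u := inv_eq_of_mul_eq_one_right hu
  have hv' : v⁻¹ = v := inv_eq_of_mul_eq_one_right hv
  have h1 : (u * v)⁻¹ = u * (u * v) * u⁻¹ := by
    rw [mul_inv_rev, hu', hv',
      show u * (u * v) * u = (u * u) * (v * u) by group, hu, one_mul]
  calc ((u * v) ^ k)⁻¹ = ((u * v)⁻¹) ^ k := by rw [inv_pow]
    _ = (u * (u * v) * u⁻¹) ^ k := by rw [h1]
    _ = u * (u * v) ^ k * u⁻¹ := by rw [conj_pow]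
    _ = u * (u * v) ^ k * u := by rw [hu']

lemma conj_c1 (hu : u * u = 1) (hv : v * v = 1) (k : ℕ) :
    (u * v) ^ k * u * ((u * v) ^ k)⁻¹ = (u * v) ^ (2 * k) * u := by
  rw [pow_uv_inv hu hv, two_mul, pow_add]
  calc (u * v) ^ k * u * (u * (u * v) ^ k * u)
      = (u * v) ^ k * (u * u) * (u * v) ^ k * u := by group
    _ = (u * v) ^ k * (u * v) ^ k * u := by rw [hu]; group

lemma conj_c2 (hu : u * u = 1) (hv : v * v = 1) (k : ℕ) :
    (u * v) ^ k * (u * v * u) * ((u * v) ^ k)⁻¹ = (u * v) ^ (2 * k + 1) * u := by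
  rw [pow_uv_inv hu hv, two_mul, pow_add, pow_add, pow_one]
  calc (u * v) ^ k * (u * v * u) * (u * (u * v) ^ k * u)
      = (u * v) ^ k * (u * v) * (u * u) * (u * v) ^ k * u := by group
    _ = (u * v) ^ k * (u * v) * (u * v) ^ k * u := by rw [hu]; group
    _ = ((u * v) ^ k * (u * v) ^ k) * (u * v) * u := by
        have : (u * v) * (u * v) ^ k = (u * v) ^ k * (u * v) := by
          rw [← pow_succ', ← pow_succ]
        rw [mul_assoc ((u*v)^k), this]; group

end Invol

noncomputable def pf (i : B) : (W → Multiplicative (ZMod 2)) ⋊[conjAct] W :=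
  ⟨ind (σ i), σ i⟩

lemma pf_mul (i i' : B) : pf cs i * pf cs i' =
    ⟨ind (σ i) * ind (σ i * σ i' * σ i), σ i * σ i'⟩ := by
  show (⟨_,_⟩ : _ ⋊[conjAct] W) = _
  congr 1
  show ind (σ i) * conjAct (σ i) (ind (σ i')) = _
  rw [conjAct_ind, cs.inv_simple]

lemma pf_pow (i i' : B) (k : ℕ) : (pf cs i * pf cs i') ^ k =
    ⟨∏ j ∈ Finset.range (2 * k), ind ((σ i * σ i') ^ j * σ i), (σ i * σ i') ^ k⟩ := by
  have hu : σ i * σ i = 1 := cs.simple_mul_simple_self i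
  have hv : σ i' * σ i' = 1 := cs.simple_mul_simple_self i'
  induction k with
  | zero => simp
  | succ k ih =>
      rw [pow_succ, ih, pf_mul]
      show (⟨_,_⟩ : _ ⋊[conjAct] W) = _
      congr 1
      · show (∏ j ∈ Finset.range (2 * k), ind ((σ i * σ i') ^ j * σ i)) *
          conjAct ((σ i * σ i') ^ k) (ind (σ i) * ind (σ i * σ i' * σ i)) = _
        rw [map_mul, conjAct_ind, conjAct_ind, conj_c1 hu hv, conj_c2 hu hv]
        have : 2 * (k + 1) = (2 * k + 1) + 1 := by ring
        rw [this, Finset.prod_range_succ, Finset.prod_range_succ]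
        rw [mul_assoc]
      · rw [pow_succ]

lemma pf_liftable : M.IsLiftable (fun i => pf cs i) := by
  intro i i'
  show (pf cs i * pf cs i') ^ M i i' = 1
  rw [pf_pow]
  have hrel : (σ i * σ i') ^ M i i' = 1 := cs.simple_mul_simple_pow i i'
  have hprod : (∏ j ∈ Finset.range (2 * M i i'), ind ((σ i * σ i') ^ j * σ i)) = 1 := by
    rw [two_mul, Finset.prod_range_add]
    have : ∀ x, (σ i * σ i') ^ (M i i' + x) = (σ i * σ i') ^ x := by
      intro x; rw [pow_add, hrel, one_mul]
    calc _ = (∏ j ∈ Finset.range (M i i'), ind ((σ i * σ i') ^ j * σ i)) *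
          ∏ j ∈ Finset.range (M i i'), ind ((σ i * σ i') ^ j * σ i) := by
            congr 1
            exact Finset.prod_congr rfl (fun x _ => by rw [this x])
      _ = 1 := mulA_self _
  rw [hprod, hrel]
  rfl

/-- The parity homomorphism recording inversion multiplicities mod 2. -/
noncomputable def phi : W →* (W → Multiplicative (ZMod 2)) ⋊[conjAct] W :=
  cs.lift ⟨fun i => pf cs i, pf_liftable cs⟩

@[simp] lemma phi_simple (i : B) : phi cs (σ i) = pf cs i :=
  cs.lift_apply_simple (pf_liftable cs) i

lemma phi_right (w : W) : (phi cs w).right = w := by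
  induction w using cs.simple_induction with
  | simple i => rw [phi_simple]; rfl
  | one => simp
  | mul w w' h h' => rw [map_mul]; show (phi cs w).right * (phi cs w').right = w * w'; rw [h, h']

/-- Parity of the number of times a reflection appears in inversion sequences. -/
noncomputable def npar (w t : W) : ZMod 2 := Multiplicative.toAdd ((phi cs w).left t)

lemma npar_mul (a b t : W) : npar cs (a * b) t = npar cs a t + npar cs b (a⁻¹ * t * a) := by
  unfold npar
  rw [map_mul]
  show Multiplicative.toAdd (((phi cs a).left * conjAct (phi cs a).right (phi cs b).left) t) = _
  rw [phi_right]
  show Multiplicative.toAdd ((phi cs a).left t * (phi cs b).left (a⁻¹ * t * a)) = _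
  rw [toAdd_mul]

@[simp] lemma npar_one (t : W) : npar cs 1 t = 0 := by
  unfold npar; rw [map_one]; rfl

lemma npar_simple (i : B) (t : W) : npar cs (σ i) t = if t = σ i then 1 else 0 := by
  unfold npar
  rw [phi_simple]
  show Multiplicative.toAdd (ind (σ i) t) = _
  unfold ind
  split <;> rfl

end BruhatAux

namespace BruhatAux

variable {B : Type*} {W : Type*} [Group W] {M : CoxeterMatrix B} (cs : CoxeterSystem M W)

local prefix:100 "σ" => cs.simple
local prefix:100 "π" => cs.wordProd
local prefix:100 "ℓ" => cs.length

lemma z2_cancel : ∀ x y : ZMod 2, x + y = 0 → y = x := by decide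
lemma z2_cases : ∀ x : ZMod 2, x = 0 ∨ x = 1 := by decide
lemma z2_sandwich : ∀ x : ZMod 2, x + 1 + x = 1 := by decide

lemma phi_left_wordProd : ∀ ω : List B, (phi cs (π ω)).left = ((cs.leftInvSeq ω).map ind).prod
  | [] => by
      rw [cs.wordProd_nil, map_one]
      rfl
  | i :: ω => by
      rw [cs.wordProd_cons, map_mul]
      show (phi cs (σ i)).left * conjAct (phi cs (σ i)).right (phi cs (π ω)).left = _
      rw [phi_simple]
      show ind (σ i) * conjAct (σ i) (phi cs (π ω)).left = _
      rw [phi_left_wordProd ω]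
      have hcons : cs.leftInvSeq (i :: ω) = σ i :: List.map (MulAut.conj (σ i)) (cs.leftInvSeq ω) :=
        rfl
      rw [hcons, List.map_cons, List.prod_cons]
      congr 1
      rw [map_list_prod (conjAct (σ i)), List.map_map, List.map_map]
      congr 1
      apply List.map_congr_left
      intro z _
      simp only [Function.comp_apply, conjAct_ind, MulAut.conj_apply]

lemma prod_map_ind (L : List W) (t : W) :
    Multiplicative.toAdd ((L.map ind).prod t) = (L.count t : ZMod 2) := by
  induction L with
  | nil => simp
  | cons z L ih =>
      rw [List.map_cons, List.prod_cons, List.count_cons]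
      show Multiplicative.toAdd (ind z t * (L.map ind).prod t) = _
      rw [toAdd_mul, ih]
      by_cases h : t = z
      · subst h
        simp [ind, add_comm]
      · have h' : ¬ (z = t) := fun hh => h hh.symm
        simp [ind, h, h']

lemma npar_wordProd (ω : List B) (t : W) :
    npar cs (π ω) t = ((cs.leftInvSeq ω).count t : ZMod 2) := by
  unfold npar
  rw [phi_left_wordProd, prod_map_ind]

lemma npar_inv (a t : W) : npar cs a⁻¹ t = npar cs a (a * t * a⁻¹) := by
  have h := npar_mul cs a a⁻¹ (a * t * a⁻¹)
  rw [mul_inv_cancel, npar_one] at h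
  have : a⁻¹ * (a * t * a⁻¹) * a = t := by group
  rw [this] at h
  exact z2_cancel _ _ h.symm

lemma npar_refl_self {t : W} (ht : cs.IsReflection t) : npar cs t t = 1 := by
  obtain ⟨u, i, rfl⟩ := ht
  set T := u * σ i * u⁻¹ with hT
  have h1 : npar cs T T = npar cs (u * σ i) T + npar cs u⁻¹ ((u * σ i)⁻¹ * T * (u * σ i)) := by
    rw [hT]
    rw [show u * σ i * u⁻¹ = (u * σ i) * u⁻¹ by group] 
    exact npar_mul cs (u * σ i) u⁻¹ _
  have e1 : (u * σ i)⁻¹ * T * (u * σ i) = σ i := by rw [hT]; group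
  have h2 : npar cs (u * σ i) T = npar cs u T + npar cs (σ i) (u⁻¹ * T * u) := npar_mul cs u _ T
  have e2 : u⁻¹ * T * u = σ i := by rw [hT]; group
  have h3 : npar cs u⁻¹ (σ i) = npar cs u T := by
    rw [npar_inv, hT]
  rw [e1, h3, h2, e2, npar_simple, if_pos rfl] at h1
  rw [h1]
  exact z2_sandwich _

lemma length_lt_iff_npar {w t : W} (ht : cs.IsReflection t) :
    ℓ (t * w) < ℓ w ↔ npar cs w t = 1 := by
  constructor
  · intro h
    by_contra h'
    have h0 : npar cs w t = 0 := (z2_cases _).resolve_right h'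
    have h1 : npar cs (t * w) t = 1 := by
      rw [npar_mul, npar_refl_self cs ht, show t⁻¹ * t * t = t by group, h0]
      decide
    -- from npar = 1 get length decrease for t * w
    obtain ⟨ω, hred, hw⟩ := cs.exists_reduced_word' (t * w)
    rw [hw] at h1
    rw [npar_wordProd] at h1
    have hmem : t ∈ cs.leftInvSeq ω := by
      by_contra hmem
      rw [List.count_eq_zero_of_not_mem hmem] at h1
      simp at h1
    have := (cs.isLeftInversion_of_mem_leftInvSeq hred hmem).2
    rw [← hw] at this
    rw [show t * (t * w) = w by rw [← mul_assoc, ht.mul_self, one_mul]] at this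
    omega
  · intro h
    obtain ⟨ω, hred, hw⟩ := cs.exists_reduced_word' w
    rw [hw, npar_wordProd] at h
    have hmem : t ∈ cs.leftInvSeq ω := by
      by_contra hmem
      rw [List.count_eq_zero_of_not_mem hmem] at h
      simp at h
    have := (cs.isLeftInversion_of_mem_leftInvSeq hred hmem).2
    rw [hw]
    exact this

lemma mem_leftInvSeq_of_lt {t : W} (ht : cs.IsReflection t) {ω : List B}
    (h : ℓ (t * π ω) < ℓ (π ω)) : t ∈ cs.leftInvSeq ω := by
  have h1 := (length_lt_iff_npar cs ht).mp h
  rw [npar_wordProd] at h1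
  by_contra hmem
  rw [List.count_eq_zero_of_not_mem hmem] at h1
  simp at h1

lemma mem_rightInvSeq_of_lt {t : W} (ht : cs.IsReflection t) {ω : List B}
    (h : ℓ (π ω * t) < ℓ (π ω)) : t ∈ cs.rightInvSeq ω := by
  have h' : ℓ (t * π ω.reverse) < ℓ (π ω.reverse) := by
    rw [cs.wordProd_reverse]
    rw [show t * (π ω)⁻¹ = (π ω * t)⁻¹ by rw [mul_inv_rev, ht.inv]]
    rw [cs.length_inv, cs.length_inv]
    exact h
  have := mem_leftInvSeq_of_lt cs ht h'
  rw [cs.leftInvSeq_reverse] at this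
  exact List.mem_reverse.mp this

lemma strong_exchange_right {t : W} (ht : cs.IsReflection t) {ω : List B}
    (h : ℓ (π ω * t) < ℓ (π ω)) :
    ∃ l, l < ω.length ∧ (cs.rightInvSeq ω).getD l 1 = t ∧ π ω * t = π (ω.eraseIdx l) := by
  have hmem := mem_rightInvSeq_of_lt cs ht h
  obtain ⟨l, hl, hget⟩ := List.getElem_of_mem hmem
  rw [cs.length_rightInvSeq] at hl
  have hgetD : (cs.rightInvSeq ω).getD l 1 = t := by
    rw [List.getD_eq_getElem _ _ (by rw [cs.length_rightInvSeq]; exact hl)]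
    exact hget
  refine ⟨l, hl, hgetD, ?_⟩
  rw [← hgetD]
  exact cs.wordProd_mul_getD_rightInvSeq ω l

end BruhatAux

namespace BruhatAux

variable {B : Type*} {W : Type*} [Group W] {M : CoxeterMatrix B} (cs : CoxeterSystem M W)

local prefix:100 "σ" => cs.simple
local prefix:100 "π" => cs.wordProd
local prefix:100 "ℓ" => cs.length

lemma isReduced_nil : cs.IsReduced ([] : List B) := by
  show ℓ (π ([] : List B)) = _
  rw [cs.wordProd_nil, cs.length_one]
  rfl

lemma deletion_aux : ∀ n, ∀ ω : List B, ω.length ≤ n →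
    ∃ τ, τ.Sublist ω ∧ cs.IsReduced τ ∧ π τ = π ω := by
  intro n
  induction n with
  | zero =>
      intro ω hω
      have : ω = [] := List.eq_nil_of_length_eq_zero (Nat.le_zero.mp hω)
      subst this
      exact ⟨[], List.Sublist.refl _, isReduced_nil cs, rfl⟩
  | succ n ih =>
      intro ω hω
      by_cases hred : cs.IsReduced ω
      · exact ⟨ω, List.Sublist.refl _, hred, rfl⟩
      · have hne : ω ≠ [] := by
          rintro rfl; exact hred (isReduced_nil cs)
        have hlen1 : 1 ≤ ω.length := List.length_pos_iff.mpr hne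
        have hwit : ¬ cs.IsReduced (ω.take ((ω.length - 1) + 1)) := by
          rw [Nat.sub_add_cancel hlen1, List.take_length]; exact hred
        have hex : ∃ k, ¬ cs.IsReduced (ω.take (k+1)) := ⟨ω.length - 1, hwit⟩
        classical
        set k := Nat.find hex with hkdef
        have hk : ¬ cs.IsReduced (ω.take (k+1)) := Nat.find_spec hex
        have hkmin : ∀ m, m < k → cs.IsReduced (ω.take (m+1)) := fun m hm =>
          not_not.mp (Nat.find_min hex hm)
        have hkle : k ≤ ω.length - 1 := Nat.find_le hwit
        have hklt : k < ω.length := by omega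
        have hk1 : 1 ≤ k := by
          by_contra hcon
          push_neg at hcon
          interval_cases k
          · obtain ⟨a, ω', rfl⟩ := List.exists_cons_of_ne_nil hne
            apply hk
            show ℓ (π ((a :: ω').take 1)) = _
            rw [show (a :: ω').take 1 = [a] from rfl, cs.wordProd_singleton, cs.length_simple]
            rfl
        have htk : cs.IsReduced (ω.take k) := by
          have := hkmin (k-1) (by omega)
          rwa [Nat.sub_add_cancel hk1] at this
        have htake : ω.take (k+1) = ω.take k ++ [ω[k]] := by
          rw [List.take_succ, List.getElem?_eq_getElem hklt]
          rfl
        have hprod : π (ω.take (k+1)) = π (ω.take k) * σ (ω[k]) := by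
          rw [htake, cs.wordProd_append, cs.wordProd_singleton]
        have hlk : ℓ (π (ω.take k)) = k := by
          have := htk
          unfold CoxeterSystem.IsReduced at this
          rw [this, List.length_take]
          omega
        have hlt : ℓ (π (ω.take k) * σ (ω[k])) < ℓ (π (ω.take k)) := by
          rcases cs.length_mul_simple (π (ω.take k)) (ω[k]) with h | h
          · exfalso
            apply hk
            show ℓ (π (ω.take (k+1))) = (ω.take (k+1)).length
            rw [hprod, h, hlk, List.length_take]
            omega
          · omega
        obtain ⟨l, hl, _, hse⟩ := strong_exchange_right cs (cs.isReflection_simple (ω[k])) hlt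
        set τ' := (ω.take k).eraseIdx l ++ ω.drop (k+1) with hτ'def
        have hsub : τ'.Sublist ω := by
          conv_rhs => rw [← List.take_append_drop (k+1) ω]
          apply List.Sublist.append
          · refine (List.eraseIdx_sublist _ l).trans ?_
            rw [htake]
            exact List.sublist_append_left _ _
          · exact List.Sublist.refl _
        have hlτ' : τ'.length ≤ n := by
          rw [hτ'def, List.length_append, List.length_eraseIdx, if_pos hl]
          rw [List.length_take, List.length_drop] at *
          omega
        have hπτ' : π τ' = π ω := by
          rw [hτ'def, cs.wordProd_append, ← hse, ← hprod]
          conv_rhs => rw [← List.take_append_drop (k+1) ω]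
          rw [cs.wordProd_append]
        obtain ⟨τ, hsub2, hred2, hπ2⟩ := ih τ' hlτ'
        exact ⟨τ, hsub2.trans hsub, hred2, by rw [hπ2, hπτ']⟩

lemma deletion (ω : List B) : ∃ τ, τ.Sublist ω ∧ cs.IsReduced τ ∧ π τ = π ω :=
  deletion_aux cs ω.length ω le_rfl

/-- One step of the reflection ("chain") order: `u = v * t` with `ℓ u < ℓ v`. -/
def bstep (u v : W) : Prop := ∃ t, cs.IsReflection t ∧ u = v * t ∧ ℓ u < ℓ v

/-- The reflection ("chain") order. -/
def cle : W → W → Prop := Relation.ReflTransGen (bstep cs)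

lemma cle_to_bruhat {u w : W} (h : cle cs u w) : cs.bruhatLE u w := by
  induction h using Relation.ReflTransGen.head_induction_on with
  | refl => exact fun ω hred hw => ⟨ω, List.Sublist.refl _, hred, hw⟩
  | head hstep hchain ih =>
      intro ω hred hw
      obtain ⟨τ, hsub, hτred, hτ⟩ := ih ω hred hw
      obtain ⟨t, ht, heq, hlen⟩ := hstep
      have hlt : ℓ (π τ * t) < ℓ (π τ) := by rw [← hτ, ← heq]; exact hlen
      obtain ⟨l, hl, _, hse⟩ := strong_exchange_right cs ht hlt
      obtain ⟨τ₂, hsub2, hred2, hπ2⟩ := deletion cs (τ.eraseIdx l)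
      refine ⟨τ₂, (hsub2.trans (List.eraseIdx_sublist _ l)).trans hsub, hred2, ?_⟩
      rw [hπ2, ← hse, ← hτ, ← heq]

lemma step_lift {u w : W} (h : bstep cs u w) (i : B) :
    cle cs (u * σ i) w ∨ cle cs (u * σ i) (w * σ i) := by
  obtain ⟨t, ht, hu, hlen⟩ := h
  by_cases hus : u * σ i = w
  · left; rw [hus]; exact Relation.ReflTransGen.refl
  by_cases h1 : ℓ (u * σ i) < ℓ u
  · left
    have s1 : bstep cs (u * σ i) u := ⟨σ i, cs.isReflection_simple i, rfl, h1⟩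
    have s2 : bstep cs u w := ⟨t, ht, hu, hlen⟩
    exact Relation.ReflTransGen.head s1 (Relation.ReflTransGen.single s2)
  push_neg at h1
  have h1' : ℓ u < ℓ (u * σ i) := lt_of_le_of_ne h1 (Ne.symm (cs.length_mul_simple_ne u i))
  have hr : cs.IsReflection (σ i * t * σ i) := by
    have := ht.conj (σ i)
    rwa [cs.inv_simple] at this
  have hprod : u * σ i = (w * σ i) * (σ i * t * σ i) := by
    rw [hu]
    have hss := cs.simple_mul_simple_self i
    calc w * t * σ i = w * (σ i * σ i) * t * σ i := by rw [hss]; group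
      _ = (w * σ i) * (σ i * t * σ i) := by group
  by_cases h2 : ℓ (u * σ i) < ℓ (w * σ i)
  · right
    exact Relation.ReflTransGen.single ⟨σ i * t * σ i, hr, hprod, h2⟩
  push_neg at h2
  exfalso
  have hne : ℓ (u * σ i) ≠ ℓ (w * σ i) := by
    rw [hprod]
    exact hr.length_mul_left_ne (w * σ i)
  have h2' : ℓ (w * σ i) < ℓ (u * σ i) := lt_of_le_of_ne h2 (Ne.symm hne)
  have hui : ℓ (u * σ i) = ℓ u + 1 := by
    rcases cs.length_mul_simple u i with h | h
    · exact h
    · omega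
  have hwi : ℓ (w * σ i) = ℓ w - 1 ∧ ℓ (w * σ i) < ℓ w := by
    rcases cs.length_mul_simple w i with h | h
    · omega
    · omega
  obtain ⟨ρ, hρred, hρ⟩ := cs.exists_reduced_word' (w * σ i)
  have hρlen : ρ.length = ℓ (w * σ i) := by
    have := hρred
    unfold CoxeterSystem.IsReduced at this
    rw [← hρ] at this
    omega
  set ω := ρ ++ [i] with hωdef
  have hπω : π ω = w := by
    rw [hωdef, cs.wordProd_append, cs.wordProd_singleton, ← hρ,
      cs.simple_mul_simple_cancel_right]
  have hωred : cs.IsReduced ω := by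
    show ℓ (π ω) = ω.length
    rw [hπω, hωdef, List.length_append, hρlen]
    simp only [List.length_singleton]
    omega
  have hwt : ℓ (π ω * t) < ℓ (π ω) := by rw [hπω, ← hu]; exact hlen
  obtain ⟨l, hl, _, hse⟩ := strong_exchange_right cs ht hwt
  rw [hπω, ← hu] at hse
  rw [hωdef, List.length_append, List.length_singleton] at hl
  rcases Nat.lt_or_ge l ρ.length with hcase | hcase
  · -- l inside ρ : contradiction with h2'
    rw [hωdef, List.eraseIdx_append_of_lt_length hcase] at hse
    have : u * σ i = π (ρ.eraseIdx l) := by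
      rw [hse, cs.wordProd_append, cs.wordProd_singleton,
        cs.simple_mul_simple_cancel_right]
    have hlen2 : ℓ (u * σ i) ≤ (ρ.eraseIdx l).length := by
      rw [this]; exact cs.length_wordProd_le _
    rw [List.length_eraseIdx, if_pos hcase] at hlen2
    omega
  · -- l = ρ.length : u = w * σ i, contradiction with hus
    have hleq : l = ρ.length := by omega
    rw [hωdef, hleq, List.eraseIdx_append_of_length_le le_rfl] at hse
    simp only [Nat.sub_self, List.eraseIdx_cons_zero, List.append_nil] at hse
    exact hus (by rw [hse, ← hρ, cs.simple_mul_simple_cancel_right])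

lemma cle_lift {u w : W} (h : cle cs u w) (i : B) :
    cle cs (u * σ i) w ∨ cle cs (u * σ i) (w * σ i) := by
  induction h using Relation.ReflTransGen.head_induction_on with
  | refl =>
      by_cases hh : ℓ (w * σ i) < ℓ w
      · left
        exact Relation.ReflTransGen.single ⟨σ i, cs.isReflection_simple i, rfl, hh⟩
      · right; exact Relation.ReflTransGen.refl
  | head hstep hchain ih =>
      rcases step_lift cs hstep i with hc | hc
      · left; exact hc.trans hchain
      · rcases ih with hc' | hc'
        · left; exact hc.trans hc'
        · right; exact hc.trans hc'

lemma cle_of_sublist : ∀ {ω τ : List B}, cs.IsReduced ω → cs.IsReduced τ → τ.Sublist ω →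
    cle cs (π τ) (π ω) := by
  intro ω
  induction ω using List.reverseRecOn with
  | nil =>
      intro τ _ _ hsub
      obtain rfl := List.sublist_nil.mp hsub
      exact Relation.ReflTransGen.refl
  | append_singleton ρ i ih =>
      intro τ hred hτred hsub
      have hρred : cs.IsReduced ρ := by
        have := hred.take ρ.length
        rwa [List.take_left] at this
      have hπ : π (ρ ++ [i]) = π ρ * σ i := by
        rw [cs.wordProd_append, cs.wordProd_singleton]
      have hstep : bstep cs (π ρ) (π (ρ ++ [i])) := by
        refine ⟨σ i, cs.isReflection_simple i, ?_, ?_⟩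
        · rw [hπ, cs.simple_mul_simple_cancel_right]
        · have h1 : ℓ (π ρ) = ρ.length := hρred
          have h2 : ℓ (π (ρ ++ [i])) = ρ.length + 1 := by
            have := hred
            unfold CoxeterSystem.IsReduced at this
            rw [this, List.length_append, List.length_singleton]
          omega
      obtain ⟨τ₁, τ₂, rfl, hsub1, hsub2⟩ := List.sublist_append_iff.mp hsub
      rcases List.sublist_singleton.mp hsub2 with rfl | rfl
      · rw [List.append_nil] at *
        exact (ih hρred hτred hsub1).tail hstep
      · have hτ₁red : cs.IsReduced τ₁ := by
          have := hτred.take τ₁.length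
          rwa [List.take_left] at this
        have hτπ : π (τ₁ ++ [i]) = π τ₁ * σ i := by
          rw [cs.wordProd_append, cs.wordProd_singleton]
        rcases cle_lift cs (ih hρred hτ₁red hsub1) i with hc | hc
        · rw [hτπ]
          exact hc.tail hstep
        · rw [hτπ, hπ]
          exact hc

lemma bruhat_to_cle {u w : W} (h : cs.bruhatLE u w) : cle cs u w := by
  obtain ⟨ω, hred, hw⟩ := cs.exists_reduced_word' w
  obtain ⟨τ, hsub, hτred, hτ⟩ := h ω hred hw
  rw [hτ, hw]
  exact cle_of_sublist cs hred hτred hsub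

end BruhatAux

open BruhatAux in
theorem prefix_minimal_factorization {B W : Type*} [Group W] {M : CoxeterMatrix B}
    (cs : CoxeterSystem M W) (w x : W) (j : B) (hw1 : w ≠ 1)
    (hs : cs.length (w * cs.simple j) > cs.length w)
    (hwx : cs.bruhatLE w x) (hwsx : ¬ cs.bruhatLE (w * cs.simple j) x) :
    ∀ ω : List B, cs.IsReduced ω → x = cs.wordProd ω →
      ∀ n : ℕ, cs.bruhatLE w (cs.wordProd (ω.take n)) →
        (∀ m : ℕ, m < n → ¬ cs.bruhatLE w (cs.wordProd (ω.take m))) →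
        (ω.take n).getLast? ≠ some j ∧ ∀ i ∈ ω.drop n, i ≠ j := by
  intro ω hω hx n hn hmin
  have hred_take : ∀ m, cs.IsReduced (ω.take m) := fun m => hω.take m
  have hn0 : n ≠ 0 := by
    rintro rfl
    obtain ⟨τ, hsub, -, hτ⟩ := hn [] (isReduced_nil cs) (by rw [List.take_zero])
    obtain rfl := List.sublist_nil.mp hsub
    exact hw1 (by rw [hτ, cs.wordProd_nil])
  have hnle : n ≤ ω.length := by
    by_contra hcon
    push_neg at hcon
    apply hmin ω.length hcon
    have heq : ω.take ω.length = ω.take n := by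
      rw [List.take_length, List.take_of_length_le (le_of_lt hcon)]
    rw [heq]
    exact hn
  obtain ⟨τ, hτsub, hτred, hτw⟩ := hn (ω.take n) (hred_take n) rfl
  have hℓw : cs.length w = τ.length := by rw [hτw]; exact hτred
  have hnotend : ∀ τ₀ : List B, τ = τ₀ ++ [j] → False := by
    intro τ₀ hτ₀
    have h1 : w = cs.wordProd τ₀ * cs.simple j := by
      rw [hτw, hτ₀, cs.wordProd_append, cs.wordProd_singleton]
    have h2 : cs.wordProd τ₀ = w * cs.simple j := by
      rw [h1, cs.simple_mul_simple_cancel_right]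
    have h3 : cs.length (w * cs.simple j) ≤ τ₀.length := by
      rw [← h2]; exact cs.length_wordProd_le τ₀
    have h4 : τ.length = τ₀.length + 1 := by
      rw [hτ₀, List.length_append, List.length_singleton]
    omega
  constructor
  · intro hlast
    obtain ⟨m, rfl⟩ := Nat.exists_eq_succ_of_ne_zero hn0
    have hmlt : m < ω.length := by omega
    have htake : ω.take (m+1) = ω.take m ++ [ω[m]] := by
      rw [List.take_succ, List.getElem?_eq_getElem hmlt]; rfl
    have hj : ω[m] = j := by
      rw [htake] at hlast
      have : (ω.take m ++ [ω[m]]).getLast? = some (ω[m]) := by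
        exact List.getLast?_concat
      rw [this] at hlast
      exact Option.some_injective _ hlast
    rw [htake, hj] at hτsub
    obtain ⟨τ₁, τ₂, rfl, hs1, hs2⟩ := List.sublist_append_iff.mp hτsub
    rcases List.sublist_singleton.mp hs2 with rfl | rfl
    · apply hmin m (by omega)
      apply cle_to_bruhat cs
      rw [hτw, List.append_nil]
      exact cle_of_sublist cs (hred_take m) (by rwa [List.append_nil] at hτred) hs1
    · exact hnotend τ₁ rfl
  · intro i hi
    rintro rfl
    obtain ⟨k', hk'len, hk'⟩ := List.mem_iff_getElem.mp hi
    rw [List.getElem_drop] at hk'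
    have hklt : n + k' < ω.length := by
      rw [List.length_drop] at hk'len; omega
    have hπτj : cs.wordProd (τ ++ [i]) = w * cs.simple i := by
      rw [cs.wordProd_append, cs.wordProd_singleton, ← hτw]
    have hℓwj : cs.length (w * cs.simple i) = cs.length w + 1 := by
      rcases cs.length_mul_simple w i with h | h
      · exact h
      · omega
    have hτjred : cs.IsReduced (τ ++ [i]) := by
      show cs.length (cs.wordProd (τ ++ [i])) = _
      rw [hπτj, hℓwj, List.length_append, List.length_singleton, hℓw]
    have hsubk : (ω.take n).Sublist (ω.take (n + k')) := by
      rw [show ω.take n = (ω.take (n + k')).take n by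
        rw [List.take_take]; congr 1; omega]
      exact List.take_sublist n (ω.take (n + k'))
    have htakek : ω.take (n + k' + 1) = ω.take (n + k') ++ [ω[n + k']] := by
      rw [List.take_succ, List.getElem?_eq_getElem hklt]; rfl
    have hsubj : (τ ++ [i]).Sublist (ω.take (n + k' + 1)) := by
      rw [htakek, hk']
      exact List.Sublist.append (hτsub.trans hsubk) (List.Sublist.refl _)
    have hc1 : cle cs (w * cs.simple i) (cs.wordProd (ω.take (n + k' + 1))) := by
      rw [← hπτj]
      exact cle_of_sublist cs (hred_take (n + k' + 1)) hτjred hsubj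
    have hc2 : cle cs (cs.wordProd (ω.take (n + k' + 1))) x := by
      rw [hx]
      exact cle_of_sublist cs hω (hred_take (n + k' + 1)) (List.take_sublist _ _)
    exact hwsx (cle_to_bruhat cs (hc1.trans hc2))
end
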